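/- arXiv:1012.2494 — 8 statements merged into one kernel-verified Lean document; each statement's English description precedes it below -/
import Mathlib

section
/- Let d ≥ 1 and let f₀ : ℝ^d × ℝ^d → ℝ be a C² function with compact support. Define ρ(x) = ∫_{ℝ^d} f₀(x,v) dv and m(x) = ∫_{ℝ^d} v f₀(x,v) dv. Then there exists a constant C ≥ 0 such that for all x ∈ ℝ^d and all h ∈ ℝ with |h| ≤ 1, |∫_{ℝ^d} f₀(x − h v, v) dv − ρ(x) + h (div_x m)(x)| ≤ C h². (This is the key estimate showing the density computed after the free-streaming half step of Strang splitting, ∫ f(tⁿ, x − (Δt/2)v, v) dv, agrees with ρ(tⁿ + Δt/2, x) to second order in Δt for exact solutions of the Vlasov equation, whose density satisfies ∂_t ρ = −div_x m.) -/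
/-!
Expanding `f₀` to second order in `x` along `-h v` gives
`f₀ (x - h v, v) = f₀ (x, v) - h ∂ₓf₀ (x, v) v + O(h² |v|²)`, uniformly because `Df₀` is
Lipschitz; since `v` ranges over the compact projection of the support, integrating in `v` keeps
the error `O(h²)`. The first-order term is the divergence of `m`: differentiating under the
integral sign, `Dm(x) = ∫ ∂ₓf₀(x, v) ⊗ v dv`, whose trace is `∫ ∂ₓf₀(x, v) v dv`.
-/

open MeasureTheory Set
open scoped NNReal

theorem norm_image_add_sub_sub_fderiv_le {E F : Type*} [NormedAddCommGroup E] [NormedSpace ℝ E]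
    [NormedAddCommGroup F] [NormedSpace ℝ F] {g : E → F} {L : ℝ≥0}
    (hg : Differentiable ℝ g) (hL : LipschitzWith L (fderiv ℝ g)) (p w : E) :
    ‖g (p + w) - g p - fderiv ℝ g p w‖ ≤ L * ‖w‖ ^ 2 := by
  have hbound : ∀ z ∈ Metric.closedBall p ‖w‖, ‖fderiv ℝ g z - fderiv ℝ g p‖ ≤ L * ‖w‖ :=
    fun z hz => by
      rw [← dist_eq_norm]
      exact (hL.dist_le_mul z p).trans (by gcongr; exact hz)
  have hw : p + w ∈ Metric.closedBall p ‖w‖ := by simp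
  have := (convex_closedBall p ‖w‖).norm_image_sub_le_of_norm_fderiv_le'
    (fun z _ => hg z) hbound (Metric.mem_closedBall_self (norm_nonneg w)) hw
  simpa [pow_two, mul_assoc] using this

theorem HasCompactSupport.exists_isCompact_forall_snd_notMem {X Y M : Type*}
    [TopologicalSpace X] [TopologicalSpace Y] [Zero M] {F : X × Y → M}
    (hF : HasCompactSupport F) : ∃ K : Set Y, IsCompact K ∧ ∀ x y, y ∉ K → F (x, y) = 0 :=
  ⟨Prod.snd '' tsupport F, hF.image continuous_snd, fun x y hy =>
    image_eq_zero_of_notMem_tsupport fun h => hy ⟨(x, y), h, rfl⟩⟩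

theorem ContinuousLinearMap.trace_pi_eq_sum {ι R : Type*} [Fintype ι] [DecidableEq ι]
    [CommRing R] [TopologicalSpace R] (f : (ι → R) →L[R] (ι → R)) :
    LinearMap.trace R (ι → R) f = ∑ i, f (Pi.single i 1) i := by
  rw [LinearMap.trace_eq_matrix_trace R (Pi.basisFun R ι)]
  simp [Matrix.trace]

section ParametricIntegral

variable {E V G : Type*} [NormedAddCommGroup E] [NormedSpace ℝ E]
  [NormedAddCommGroup V] [NormedSpace ℝ V] [MeasurableSpace V] [BorelSpace V]
  [SecondCountableTopology V] {μ : Measure V} [IsFiniteMeasureOnCompacts μ]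
  [NormedAddCommGroup G] [NormedSpace ℝ G]

theorem hasFDerivAt_integral_of_contDiff_of_hasCompactSupport {F : E × V → G}
    (hF : ContDiff ℝ 1 F) (hsupp : HasCompactSupport F) (x : E) :
    HasFDerivAt (fun y => ∫ v, F (y, v) ∂μ)
      (∫ v, fderiv ℝ F (x, v) ∘L ContinuousLinearMap.inl ℝ E V ∂μ) x := by
  have hF' := hF.continuous_fderiv one_ne_zero
  obtain ⟨K, hK, hFK⟩ := hsupp.exists_isCompact_forall_snd_notMem
  obtain ⟨K', hK', hF'K'⟩ := (hsupp.fderiv ℝ).exists_isCompact_forall_snd_notMem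
  obtain ⟨C, hC⟩ := (hsupp.fderiv ℝ).exists_bound_of_continuous hF'
  have hslice : ∀ y, Continuous fun v => F (y, v) := fun y => hF.continuous.comp (.prodMk_right y)
  have hbound : ∀ y v,
      ‖fderiv ℝ F (y, v) ∘L ContinuousLinearMap.inl ℝ E V‖ ≤ K'.indicator (fun _ => C) v := by
    intro y v
    by_cases hv : v ∈ K'
    · rw [indicator_of_mem hv]
      calc _ ≤ ‖fderiv ℝ F (y, v)‖ * ‖ContinuousLinearMap.inl ℝ E V‖ :=
            ContinuousLinearMap.opNorm_comp_le _ _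
        _ ≤ C * 1 := by
            gcongr
            exacts [(norm_nonneg _).trans (hC 0), hC _, ContinuousLinearMap.norm_inl_le_one ℝ E V]
        _ = C := mul_one C
    · simp [indicator_of_notMem hv, hF'K' y v hv]
  have hK'int : Integrable (K'.indicator fun _ => C) μ :=
    (integrable_indicator_iff hK'.measurableSet).2 (integrableOn_const hK'.measure_lt_top.ne)
  apply hasFDerivAt_integral_of_dominated_of_fderiv_le (s := univ) Filter.univ_mem
    (.of_forall fun y => (hslice y).aestronglyMeasurable)
    ((hslice x).integrable_of_hasCompactSupport (.intro hK (hFK x)))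
    ((hF'.comp (.prodMk_right x)).clm_comp_const _).aestronglyMeasurable
    (.of_forall fun v y _ => hbound y v) hK'int
  exact .of_forall fun v y _ =>
    ((hF.differentiable one_ne_zero) (y, v)).hasFDerivAt.comp y (hasFDerivAt_prodMk_left y v)

theorem hasFDerivAt_integral_smul [CompleteSpace V] {f : V × V → ℝ} (hf : ContDiff ℝ 1 f)
    (hsupp : HasCompactSupport f) (x : V) :
    HasFDerivAt (fun y => ∫ v, f (y, v) • v ∂μ)
      (∫ v, (fderiv ℝ f (x, v) ∘L ContinuousLinearMap.inl ℝ V V).smulRight v ∂μ) x := by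
  have hm := hasFDerivAt_integral_of_contDiff_of_hasCompactSupport (μ := μ)
    (F := fun p => f p • p.2) (hf.smul contDiff_snd) hsupp.smul_right x
  refine hm.congr_fderiv (integral_congr_ae (.of_forall fun v => ?_))
  ext u
  simp [fderiv_fun_smul (hf.differentiable one_ne_zero (x, v)) differentiableAt_snd, fderiv_snd]

theorem trace_fderiv_integral_smul [FiniteDimensional ℝ V] {f : V × V → ℝ} (hf : ContDiff ℝ 1 f)
    (hsupp : HasCompactSupport f) (x : V) :
    LinearMap.trace ℝ V (fderiv ℝ (fun y => ∫ v, f (y, v) • v ∂μ) x) =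
      ∫ v, fderiv ℝ f (x, v) (v, 0) ∂μ := by
  have : CompleteSpace V := FiniteDimensional.complete ℝ V
  obtain ⟨K, hK, hfK⟩ := (hsupp.fderiv ℝ).exists_isCompact_forall_snd_notMem
  let trace : (V →L[ℝ] V) →L[ℝ] ℝ :=
    LinearMap.toContinuousLinearMap (LinearMap.trace ℝ V ∘ₗ ContinuousLinearMap.coeLM ℝ)
  have hint : Integrable
      (fun v => (fderiv ℝ f (x, v) ∘L ContinuousLinearMap.inl ℝ V V).smulRight v) μ := by
    refine Continuous.integrable_of_hasCompactSupport ?_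
      (.intro hK fun v hv => by simp [hfK x v hv])
    fun_prop
  rw [(hasFDerivAt_integral_smul hf hsupp x).fderiv]
  simpa [trace] using (trace.integral_comp_comm hint).symm

end ParametricIntegral

section FreeStreaming

variable {V : Type*} [NormedAddCommGroup V] [NormedSpace ℝ V]

theorem abs_streaming_sub_add_fderiv_le {f : V × V → ℝ} {L : ℝ≥0} (hf : Differentiable ℝ f)
    (hL : LipschitzWith L (fderiv ℝ f)) (x v : V) (h : ℝ) :
    |f (x - h • v, v) - f (x, v) + h * fderiv ℝ f (x, v) (v, 0)| ≤ L * h ^ 2 * ‖v‖ ^ 2 := by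
  have hshift : (x, v) + (-(h • v), 0) = (x - h • v, v) := by simp [sub_eq_add_neg]
  have hlin : fderiv ℝ f (x, v) (-(h • v), 0) = -(h * fderiv ℝ f (x, v) (v, 0)) := by
    rw [← smul_eq_mul, ← map_smul, ← map_neg]
    simp
  have hnorm : ‖((-(h • v), 0) : V × V)‖ = |h| * ‖v‖ := by
    simp [Prod.norm_def, norm_smul, abs_nonneg, mul_nonneg]
  have := norm_image_add_sub_sub_fderiv_le hf hL (x, v) (-(h • v), 0)
  rw [hshift, hlin, hnorm, Real.norm_eq_abs, sub_neg_eq_add, mul_pow, sq_abs] at this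
  linarith

variable [MeasurableSpace V] [BorelSpace V] {μ : Measure V} [IsFiniteMeasureOnCompacts μ]

theorem exists_abs_integral_streaming_sub_add_fderiv_le {f : V × V → ℝ} (hf : ContDiff ℝ 2 f)
    (hsupp : HasCompactSupport f) :
    ∃ C, 0 ≤ C ∧ ∀ (x : V) (h : ℝ),
      |∫ v, f (x - h • v, v) ∂μ - ∫ v, f (x, v) ∂μ + h * ∫ v, fderiv ℝ f (x, v) (v, 0) ∂μ| ≤
        C * h ^ 2 := by
  obtain ⟨L, hL⟩ := ContDiff.lipschitzWith_of_hasCompactSupport (hsupp.fderiv ℝ)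
    (hf.fderiv_right (m := 1) le_rfl) one_ne_zero
  obtain ⟨K₀, hK₀, hfK₀⟩ := hsupp.exists_isCompact_forall_snd_notMem
  obtain ⟨K₁, hK₁, hfK₁⟩ := (hsupp.fderiv ℝ).exists_isCompact_forall_snd_notMem
  set K := K₀ ∪ K₁
  have hK : IsCompact K := hK₀.union hK₁
  obtain ⟨R, hR⟩ := hK.isBounded.exists_norm_le
  refine ⟨L * R ^ 2 * μ.real K, by positivity, fun x h => ?_⟩
  have hDf : Continuous (fderiv ℝ f) := hf.continuous_fderiv two_ne_zero
  have hint : ∀ {g : V → ℝ}, Continuous g → (∀ v ∉ K, g v = 0) → Integrable g μ :=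
    fun hg hgK => hg.integrable_of_hasCompactSupport (.intro hK hgK)
  have hint₁ : Integrable (fun v => f (x - h • v, v)) μ :=
    hint (by fun_prop) fun v hv => hfK₀ _ v fun hv₀ => hv (.inl hv₀)
  have hint₂ : Integrable (fun v => f (x, v)) μ :=
    hint (by fun_prop) fun v hv => hfK₀ _ v fun hv₀ => hv (.inl hv₀)
  have hint₃ : Integrable (fun v => fderiv ℝ f (x, v) (v, 0)) μ :=
    hint (by fun_prop) fun v hv => by simp [hfK₁ x v fun hv₁ => hv (.inr hv₁)]
  have hsplit : ∫ v, (f (x - h • v, v) - f (x, v) + h * fderiv ℝ f (x, v) (v, 0)) ∂μ =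
      ∫ v, f (x - h • v, v) ∂μ - ∫ v, f (x, v) ∂μ + h * ∫ v, fderiv ℝ f (x, v) (v, 0) ∂μ := by
    rw [integral_add (by exact hint₁.sub hint₂) (hint₃.const_mul h), integral_sub hint₁ hint₂,
      integral_const_mul]
  have hvanish : ∀ v ∉ K, f (x - h • v, v) - f (x, v) + h * fderiv ℝ f (x, v) (v, 0) = 0 :=
    fun v hv => by simp [hfK₀ _ v fun hv₀ => hv (.inl hv₀), hfK₁ x v fun hv₁ => hv (.inr hv₁)]
  have hbound : ∀ v ∈ K,
      ‖f (x - h • v, v) - f (x, v) + h * fderiv ℝ f (x, v) (v, 0)‖ ≤ L * h ^ 2 * R ^ 2 :=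
    fun v hv => by
      rw [Real.norm_eq_abs]
      refine (abs_streaming_sub_add_fderiv_le (hf.differentiable two_ne_zero) hL x v h).trans ?_
      gcongr
      exact hR v hv
  rw [← hsplit, ← setIntegral_eq_integral_of_forall_compl_eq_zero hvanish, ← Real.norm_eq_abs]
  calc _ ≤ L * h ^ 2 * R ^ 2 * μ.real K :=
        norm_setIntegral_le_of_norm_le_const hK.measure_lt_top hbound
    _ = L * R ^ 2 * μ.real K * h ^ 2 := by ring

end FreeStreaming

theorem strang_density_second_order_general (d : ℕ)
    (f₀ : (Fin d → ℝ) × (Fin d → ℝ) → ℝ)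
    (hf : ContDiff ℝ 2 f₀) (hsupp : HasCompactSupport f₀) :
    ∃ C : ℝ, 0 ≤ C ∧ ∀ (x : Fin d → ℝ) (h : ℝ), |h| ≤ 1 →
      |(∫ v : Fin d → ℝ, f₀ (x - h • v, v)) - (∫ v : Fin d → ℝ, f₀ (x, v)) +
          h * (∑ i : Fin d,
            fderiv ℝ (fun y : Fin d → ℝ => ∫ v : Fin d → ℝ, f₀ (y, v) • v) x
              (Pi.single i 1) i)| ≤ C * h ^ 2 := by
  obtain ⟨C, hC, hbound⟩ := exists_abs_integral_streaming_sub_add_fderiv_le (μ := volume) hf hsupp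
  refine ⟨C, hC, fun x h _ => ?_⟩
  rw [← ContinuousLinearMap.trace_pi_eq_sum,
    trace_fderiv_integral_smul (hf.of_le (by norm_num)) hsupp]
  exact hbound x h

/-- The density computed after the free-streaming half step of Strang splitting agrees
with `ρ - h · div m` to second order in `h`. -/
theorem strang_density_second_order (d : ℕ) (hd : 1 ≤ d)
    (f₀ : (Fin d → ℝ) × (Fin d → ℝ) → ℝ)
    (hf : ContDiff ℝ 2 f₀) (hsupp : HasCompactSupport f₀) :
    ∃ C : ℝ, 0 ≤ C ∧ ∀ (x : Fin d → ℝ) (h : ℝ), |h| ≤ 1 →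
      |(∫ v : Fin d → ℝ, f₀ (x - h • v, v)) - (∫ v : Fin d → ℝ, f₀ (x, v)) +
          h * (∑ i : Fin d,
            fderiv ℝ (fun y : Fin d → ℝ => ∫ v : Fin d → ℝ, f₀ (y, v) • v) x
              (Pi.single i 1) i)| ≤ C * h ^ 2 :=
  strang_density_second_order_general d f₀ hf hsupp
end

section
/- For ν ∈ ℝ and ζ ∈ ℂ define the 2×2 complex matrix G(ν,ζ) with entries G₁₁ = 1 + ν(ζ − 1), G₁₂ = √3 ν(1 − ν)(ζ − 1), G₂₁ = √3 ν(ν − 1)(ζ − 1), G₂₂ = 1 + 2ν³(1 − ζ) + 6ν²ζ − 3ν(ζ + 1). Then for every ν ∈ [0,1] and every ζ ∈ ℂ with |ζ| = 1, every eigenvalue λ of G(ν,ζ) satisfies |λ| ≤ 1. (Consequently the piecewise-linear shift-and-project semi-Lagrangian DG update is von Neumann stable for all CFL numbers 0 ≤ ν ≤ 1.) -/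
/-!
In the orthonormal Legendre basis `1, √3 (2x - 1)` of the linear polynomials on a cell,
`slDGAmpMatrix ν ζ` is the symbol of "translate by `ν` cells, then project orthogonally onto
piecewise linears". Translation preserves the `L²` norm when `|ζ| = 1` and orthogonal projection
does not increase it, so `slDGAmpMatrix ν ζ` is a contraction of `ℂ²` with its Euclidean norm:
its `ℓ²` operator norm is at most `1`, and that norm bounds the spectral radius.

The loss `‖u‖² - ‖G u‖²` is the squared norm of the component of the translated function
orthogonal to the linear polynomials. That component lies in a 2-dimensional space (piecewise
linears with a break at `ν`), so the loss is an explicit sum of two squares; the factor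
`1 - 3ν(1 - ν) = ν³ + (1 - ν)³ > 0` comes from normalising the basis of that space.
-/

/-- The von Neumann amplification matrix of the piecewise-linear shift-and-project
semi-Lagrangian DG scheme. -/
noncomputable def slDGAmpMatrix (ν : ℝ) (ζ : ℂ) : Matrix (Fin 2) (Fin 2) ℂ :=
  !![1 + (ν : ℂ) * (ζ - 1),
     (Real.sqrt 3 : ℂ) * (ν : ℂ) * (1 - (ν : ℂ)) * (ζ - 1);
     (Real.sqrt 3 : ℂ) * (ν : ℂ) * ((ν : ℂ) - 1) * (ζ - 1),
     1 + 2 * (ν : ℂ) ^ 3 * (1 - ζ) + 6 * (ν : ℂ) ^ 2 * ζ - 3 * (ν : ℂ) * (ζ + 1)]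

open ComplexConjugate Matrix
open scoped Matrix.Norms.L2Operator

theorem slDGAmpMatrix_energy_defect (ν : ℝ) {ζ : ℂ} (hζ : ‖ζ‖ = 1) (u : Fin 2 → ℂ) :
    (1 - 3 * ν * (1 - ν)) * (‖u 0‖ ^ 2 + ‖u 1‖ ^ 2
        - (‖(slDGAmpMatrix ν ζ *ᵥ u) 0‖ ^ 2 + ‖(slDGAmpMatrix ν ζ *ᵥ u) 1‖ ^ 2)) =
      (ν * (1 - ν)) ^ 3 * ‖ζ - 1‖ ^ 2 * ‖u 1‖ ^ 2
        + ν * (1 - ν) * ‖(1 - 3 * ν * (1 - ν) : ℂ) * (ζ - 1) * u 0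
            + √3 * ((1 - 3 * ν * (1 - ν) : ℂ) * (ζ + 1)
              + ν * (1 - ν) * (2 * ν - 1) * (ζ - 1)) * u 1‖ ^ 2 := by
  have hζζ : ζ * conj ζ = 1 := by
    rw [Complex.mul_conj, Complex.normSq_eq_norm_sq, hζ]; norm_num
  have h3 : (√3 : ℂ) * √3 = 3 := by
    rw [← Complex.ofReal_mul, Real.mul_self_sqrt (by norm_num)]; norm_num
  apply Complex.ofReal_injective
  simp only [slDGAmpMatrix, mulVec, dotProduct, Fin.sum_univ_two, of_apply, cons_val',
    cons_val_zero, cons_val_one, empty_val', cons_val_fin_one, Complex.ofReal_mul,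
    Complex.ofReal_add, Complex.ofReal_sub, Complex.ofReal_pow, Complex.ofReal_one,
    Complex.ofReal_ofNat, Complex.sq_norm, ← Complex.mul_conj, map_add, map_mul, map_sub,
    map_one, map_ofNat, map_pow, Complex.conj_ofReal]
  -- `h3` absorbs the `√3 ^ 2` terms of `|G₁₂|²`, `|G₂₁|²` and of the last square
  linear_combination (-ν * (1 - 3 * ν * (1 - ν)) * (u 0 * conj (u 0)
      + (1 - ν) * √3 * (u 0 * conj (u 1) + conj (u 0) * u 1)
      + (4 * ν ^ 2 - 6 * ν + 3) * u 1 * conj (u 1))) * hζζ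
    + (-(1 - 3 * ν * (1 - ν)) * ν ^ 2 * (1 - ν) ^ 2 * (ζ - 1) * (conj ζ - 1)
        * (u 0 * conj (u 0) + u 1 * conj (u 1))
      - ν * (1 - ν) * ((1 - 3 * ν * (1 - ν)) * (ζ + 1) + ν * (1 - ν) * (2 * ν - 1) * (ζ - 1))
        * ((1 - 3 * ν * (1 - ν)) * (conj ζ + 1) + ν * (1 - ν) * (2 * ν - 1) * (conj ζ - 1))
        * u 1 * conj (u 1)) * h3

theorem slDGAmpMatrix_contraction {ν : ℝ} (hν : ν ∈ Set.Icc (0 : ℝ) 1) {ζ : ℂ} (hζ : ‖ζ‖ = 1)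
    (u : Fin 2 → ℂ) :
    ‖(slDGAmpMatrix ν ζ *ᵥ u) 0‖ ^ 2 + ‖(slDGAmpMatrix ν ζ *ᵥ u) 1‖ ^ 2
      ≤ ‖u 0‖ ^ 2 + ‖u 1‖ ^ 2 := by
  have hc : 0 < 1 - 3 * ν * (1 - ν) := by nlinarith [sq_nonneg (2 * ν - 1)]
  have hb : 0 ≤ ν * (1 - ν) := mul_nonneg hν.1 (sub_nonneg.2 hν.2)
  have hdefect : 0 ≤ (1 - 3 * ν * (1 - ν)) * (‖u 0‖ ^ 2 + ‖u 1‖ ^ 2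
      - (‖(slDGAmpMatrix ν ζ *ᵥ u) 0‖ ^ 2 + ‖(slDGAmpMatrix ν ζ *ᵥ u) 1‖ ^ 2)) := by
    rw [slDGAmpMatrix_energy_defect ν hζ u]
    exact add_nonneg (mul_nonneg (mul_nonneg (pow_nonneg hb 3) (sq_nonneg _)) (sq_nonneg _))
      (mul_nonneg hb (sq_nonneg _))
  exact sub_nonneg.1 (nonneg_of_mul_nonneg_right hdefect hc)

theorem l2_opNorm_slDGAmpMatrix_le_one {ν : ℝ} (hν : ν ∈ Set.Icc (0 : ℝ) 1) {ζ : ℂ}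
    (hζ : ‖ζ‖ = 1) : ‖slDGAmpMatrix ν ζ‖ ≤ 1 := by
  rw [cstar_norm_def]
  refine ContinuousLinearMap.opNorm_le_bound _ zero_le_one fun x ↦ ?_
  rw [one_mul, ← sq_le_sq₀ (norm_nonneg _) (norm_nonneg _)]
  simpa [EuclideanSpace.norm_sq_eq, Fin.sum_univ_two] using slDGAmpMatrix_contraction hν hζ x

/-- The piecewise-linear shift-and-project semi-Lagrangian DG update is von Neumann
stable for all CFL numbers `0 ≤ ν ≤ 1`. -/
theorem slDG_stable (ν : ℝ) (hν : ν ∈ Set.Icc (0 : ℝ) 1) (ζ : ℂ) (hζ : ‖ζ‖ = 1)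
    (lam : ℂ) (hlam : lam ∈ spectrum ℂ (slDGAmpMatrix ν ζ)) : ‖lam‖ ≤ 1 :=
  (spectrum.norm_le_norm_of_mem hlam).trans (l2_opNorm_slDGAmpMatrix_le_one hν hζ)
end

section
/- Fix L > 0 and integers N ≥ 1, M ≥ 1. Let V ⊆ L²(AddCircle L) be the closed subspace of those functions that agree almost everywhere on each cell I_i = [(i−1)L/N, iL/N), i = 1,…,N, with a polynomial of degree < M, and let P denote the orthogonal projection of L²(AddCircle L) onto V. Then for every f ∈ L²(AddCircle L) and every a ∈ ℝ, ∫ P(τ_a f) = ∫ f, where (τ_a f)(x) = f(x − a). In other words, each shift-and-project step of the semi-Lagrangian discontinuous Galerkin method exactly conserves the total mass. -/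
open MeasureTheory

/-! The constant function `1` lies in the broken polynomial space `V`, and pairing with `1` in
`L²` is integration. Since the orthogonal projection onto `V` is self-adjoint and fixes `1`,
`∫ P g = ⟪1, P g⟫ = ⟪1, g⟫ = ∫ g`; finally `∫ g = ∫ f` because Haar measure on the circle is
translation invariant. -/

namespace MeasureTheory

variable {α : Type*} [MeasurableSpace α] {μ : Measure α} [IsFiniteMeasure μ]

theorem L2.inner_const_one_left (f : Lp ℝ 2 μ) :
    inner ℝ (Lp.const 2 μ (1 : ℝ)) f = ∫ x, f x ∂μ := by
  rw [← indicatorConstLp_univ, L2.inner_indicatorConstLp_one, Measure.restrict_univ]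

theorem integral_orthogonalProjectionOnto_eq_of_const_one_mem (V : Submodule ℝ (Lp ℝ 2 μ))
    [V.HasOrthogonalProjection] (hone : Lp.const 2 μ (1 : ℝ) ∈ V) (g : Lp ℝ 2 μ) :
    ∫ x, (V.orthogonalProjectionOnto g : Lp ℝ 2 μ) x ∂μ = ∫ x, g x ∂μ := by
  rw [← L2.inner_const_one_left, ← L2.inner_const_one_left, ← V.coe_inner ⟨_, hone⟩,
    Submodule.inner_orthogonalProjectionOnto_eq_of_mem_left]

end MeasureTheory

theorem shift_project_mass_conservation_general (L : ℝ) [hL : Fact (0 < L)] (N M : ℕ)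
    (hM : 1 ≤ M)
    (V : Submodule ℝ (Lp ℝ 2 (volume : Measure (AddCircle L))))
    [Submodule.HasOrthogonalProjection V]
    (hV : ∀ f : Lp ℝ 2 (volume : Measure (AddCircle L)),
      f ∈ V ↔ ∀ i : Fin N, ∃ p : Polynomial ℝ, p.degree < (M : ℕ) ∧
        ∀ᵐ x ∂(volume.restrict (Set.Ico ((i : ℕ) * L / N) (((i : ℕ) + 1) * L / N))),
          f ((x : ℝ) : AddCircle L) = p.eval x)
    (f g : Lp ℝ 2 (volume : Measure (AddCircle L))) (a : ℝ)
    (hg : (g : AddCircle L → ℝ) =ᵐ[volume] fun x => f (x - ((a : ℝ) : AddCircle L))) :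
    ∫ x : AddCircle L, (Submodule.orthogonalProjectionOnto V g : Lp ℝ 2 (volume : Measure (AddCircle L))) x
      = ∫ x : AddCircle L, f x := by
  have hone : Lp.const 2 (volume : Measure (AddCircle L)) (1 : ℝ) ∈ V := by
    refine (hV _).2 fun i => ⟨Polynomial.C 1, ?_, ?_⟩
    · rw [Polynomial.degree_C one_ne_zero]
      exact_mod_cast hM
    -- `volume ≠ 0`, so the chosen representative of the constant class is the constant itself.
    · filter_upwards with x
      simp only [Lp.const_val, AEEqFun.coeFn_const_eq, map_one, Polynomial.eval_one]
  calc ∫ x, (V.orthogonalProjectionOnto g : Lp ℝ 2 (volume : Measure (AddCircle L))) x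
      = ∫ x, g x := integral_orthogonalProjectionOnto_eq_of_const_one_mem V hone g
    _ = ∫ x, f x := by
      rw [integral_congr_ae hg]
      exact integral_sub_right_eq_self (fun x => f x) _

/-- Each shift-and-project step of the semi-Lagrangian DG method conserves total mass:
if `V` is the broken polynomial subspace of `L²(AddCircle L)` (piecewise polynomials of
degree `< M` on the `N` congruent cells) and `g` is the translate of `f` by `a`, then the
orthogonal projection of `g` onto `V` has the same integral as `f`. -/
theorem shift_project_mass_conservation (L : ℝ) [hL : Fact (0 < L)] (N M : ℕ)
    (hN : 1 ≤ N) (hM : 1 ≤ M)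
    (V : Submodule ℝ (Lp ℝ 2 (volume : Measure (AddCircle L))))
    [Submodule.HasOrthogonalProjection V]
    (hV : ∀ f : Lp ℝ 2 (volume : Measure (AddCircle L)),
      f ∈ V ↔ ∀ i : Fin N, ∃ p : Polynomial ℝ, p.degree < (M : ℕ) ∧
        ∀ᵐ x ∂(volume.restrict (Set.Ico ((i : ℕ) * L / N) (((i : ℕ) + 1) * L / N))),
          f ((x : ℝ) : AddCircle L) = p.eval x)
    (f g : Lp ℝ 2 (volume : Measure (AddCircle L))) (a : ℝ)
    (hg : (g : AddCircle L → ℝ) =ᵐ[volume] fun x => f (x - ((a : ℝ) : AddCircle L))) :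
    ∫ x : AddCircle L, (Submodule.orthogonalProjectionOnto V g : Lp ℝ 2 (volume : Measure (AddCircle L))) x
      = ∫ x : AddCircle L, f x :=
  shift_project_mass_conservation_general L (hL := hL) N M hM V hV f g a hg
end

section
/- Let M ≥ 1 and set K = ⌈M/2⌉. Let s_1 < … < s_K be the roots of the polynomial q_K(x) = (d/dx)^K [(x² − 1)^K] (the K-point Gauss–Legendre nodes). Fix ν ∈ [0,1], a cell width Δx > 0, N ≥ 1 cells I_i = [(i−1)Δx, iΔx] with cell centers x_i, and let g : ℝ → ℝ be NΔx-periodic and on each cell I_i equal to a polynomial p_i of degree ≤ M − 1 in the reference coordinate ξ ∈ [−1,1], where x = x_i + ξΔx/2. Assume that for every i and every ℓ ∈ {1,…,K}, p_i((1−ν)s_ℓ − ν) ≥ 0 and p_i(1 − ν + ν s_ℓ) ≥ 0 (i.e., g is nonnegative at the K-point Gauss–Legendre nodes of each of the two reference subintervals [−1, 1−2ν] and [1−2ν, 1]). Then for every integer I and every cell i, ∫_{I_i} g(x − (I + ν)Δx) dx ≥ 0; in particular every cell average produced by one shift-and-project step of the semi-Lagrangian DG scheme applied to g is nonnegative, independent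 of the size of the shift. -/
open MeasureTheory Polynomial Set intervalIntegral

/-!
The `K`-point Gauss–Legendre rule is exact for polynomials of degree `< 2K` on `[-1, 1]`:
writing `f = q_K * (f / q_K) + f % q_K`, the first term integrates to zero because `q_K` is
orthogonal to all polynomials of degree `< K` (integrate by parts `K` times in Rodrigues'
formula), and the remainder has degree `< K` and agrees with `f` at the nodes. Exactness on
`L_ℓ²` shows that the weight `∫ L_ℓ` of the Lagrange basis polynomial `L_ℓ` is nonnegative, so a
polynomial of degree `≤ M - 1 < 2K` that is nonnegative at the rescaled nodes of an interval has
nonnegative integral over it. The shifted cell `[(t - ν)Δx, (t + 1 - ν)Δx]` is the union of the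
reference part `[1 - 2ν, 1]` of one cell and the reference part `[-1, 1 - 2ν]` of the next, so
its integral is `Δx / 2` times the sum of two such integrals.
-/

theorem Polynomial.natDegree_div_le_sub {F : Type*} [Field F] (p q : F[X]) :
    (p / q).natDegree ≤ p.natDegree - q.natDegree := by
  rcases eq_or_ne q 0 with rfl | hq
  · simp
  rw [div_def]
  refine (natDegree_C_mul_le _ _).trans_eq ?_
  rw [natDegree_divByMonic _ (monic_mul_leadingCoeff_inv hq),
    natDegree_mul_leadingCoeff_inv _ hq]

theorem integral_eval_mul_eval_derivative (u v : ℝ[X]) (a b : ℝ) :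
    ∫ x in a..b, u.eval x * (derivative v).eval x
      = u.eval b * v.eval b - u.eval a * v.eval a
        - ∫ x in a..b, (derivative u).eval x * v.eval x :=
  integral_mul_deriv_eq_deriv_mul (fun x _ => u.hasDerivAt x) (fun x _ => v.hasDerivAt x)
    ((Polynomial.continuous _).intervalIntegrable _ _)
    ((Polynomial.continuous _).intervalIntegrable _ _)

theorem eval_iterate_derivative_X_sq_sub_one_pow_eq_zero {K m : ℕ} (hm : m < K) {x : ℝ}
    (hx : x ^ 2 = 1) : (derivative^[m] (((X : ℝ[X]) ^ 2 - 1) ^ K)).eval x = 0 := by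
  obtain ⟨u, hu⟩ := pow_sub_dvd_iterate_derivative_pow ((X : ℝ[X]) ^ 2 - 1) K m
  simp [hu, hx, Nat.sub_ne_zero_of_lt hm]

theorem integral_mul_iterate_derivative_X_sq_sub_one_pow {K j : ℕ} (hj : j ≤ K) (r : ℝ[X]) :
    ∫ x in (-1 : ℝ)..1, r.eval x * (derivative^[j] (((X : ℝ[X]) ^ 2 - 1) ^ K)).eval x
      = (-1) ^ j * ∫ x in (-1 : ℝ)..1,
          (derivative^[j] r).eval x * (((X : ℝ[X]) ^ 2 - 1) ^ K).eval x := by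
  induction j generalizing r with
  | zero => simp
  | succ j ih =>
    rw [Function.iterate_succ_apply', integral_eval_mul_eval_derivative,
      eval_iterate_derivative_X_sq_sub_one_pow_eq_zero (by omega) (by norm_num),
      eval_iterate_derivative_X_sq_sub_one_pow_eq_zero (by omega) (by norm_num),
      ih (by omega), ← Function.iterate_succ_apply]
    ring

noncomputable def legendreRodrigues (K : ℕ) : ℝ[X] :=
  derivative^[K] ((X ^ 2 - 1) ^ K)

theorem integral_mul_legendreRodrigues_eq_zero {K : ℕ} {r : ℝ[X]} (hr : r.natDegree < K) :
    ∫ x in (-1 : ℝ)..1, r.eval x * (legendreRodrigues K).eval x = 0 := by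
  rw [legendreRodrigues, integral_mul_iterate_derivative_X_sq_sub_one_pow le_rfl,
    iterate_derivative_eq_zero hr]
  simp

theorem natDegree_X_sq_sub_one_pow (K : ℕ) :
    (((X : ℝ[X]) ^ 2 - 1) ^ K).natDegree = K + K := by
  have h2 : ((X : ℝ[X]) ^ 2 - 1).natDegree = 2 := by compute_degree!
  rw [natDegree_pow, h2]
  ring

theorem coeff_legendreRodrigues_self (K : ℕ) :
    (legendreRodrigues K).coeff K = (K + K).descFactorial K := by
  have hmonic : ((X : ℝ[X]) ^ 2 - 1).Monic := by
    simpa using monic_X_pow_sub_C (1 : ℝ) two_ne_zero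
  rw [legendreRodrigues, coeff_iterate_derivative, ← natDegree_X_sq_sub_one_pow,
    (hmonic.pow K).coeff_natDegree, nsmul_one]

theorem coeff_legendreRodrigues_self_ne_zero (K : ℕ) : (legendreRodrigues K).coeff K ≠ 0 := by
  rw [coeff_legendreRodrigues_self, Nat.cast_ne_zero, Ne, Nat.descFactorial_eq_zero_iff_lt]
  omega

theorem natDegree_legendreRodrigues (K : ℕ) : (legendreRodrigues K).natDegree = K := by
  refine le_antisymm ((natDegree_iterate_derivative _ K).trans ?_)
    (le_natDegree_of_ne_zero (coeff_legendreRodrigues_self_ne_zero K))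
  rw [natDegree_X_sq_sub_one_pow]
  omega

section GaussQuadrature

variable {K : ℕ} {s : Fin K → ℝ}

variable (s) in
noncomputable def gaussWeight (ℓ : Fin K) : ℝ :=
  ∫ x in (-1 : ℝ)..1, (Lagrange.basis Finset.univ s ℓ).eval x

theorem integral_eq_sum_gaussWeight_of_degree_lt (hs : Function.Injective s) {r : ℝ[X]}
    (hr : r.degree < K) :
    ∫ x in (-1 : ℝ)..1, r.eval x = ∑ ℓ, gaussWeight s ℓ * r.eval (s ℓ) := by
  conv_lhs =>
    rw [Lagrange.eq_interpolate (f := r) (s := Finset.univ) hs.injOn (by simpa using hr)]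
  simp only [Lagrange.interpolate_apply, eval_finsetSum, eval_mul, eval_C]
  rw [integral_finsetSum fun ℓ _ => Continuous.intervalIntegrable (by fun_prop) _ _]
  refine Finset.sum_congr rfl fun ℓ _ => ?_
  rw [intervalIntegral.integral_const_mul, gaussWeight, mul_comm]

variable (hs : Function.Injective s) (hroot : ∀ ℓ, (legendreRodrigues K).IsRoot (s ℓ))
include hs hroot

theorem integral_eq_sum_gaussWeight {f : ℝ[X]} (hf : f.natDegree < 2 * K) :
    ∫ x in (-1 : ℝ)..1, f.eval x = ∑ ℓ, gaussWeight s ℓ * f.eval (s ℓ) := by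
  set Q := legendreRodrigues K
  have hQ : Q ≠ 0 := fun h => coeff_legendreRodrigues_self_ne_zero K (by simp [Q, h])
  have hdiv : ∀ x, f.eval x = (f / Q).eval x * Q.eval x + (f % Q).eval x := fun x => by
    rw [← eval_mul, mul_comm, ← eval_add, EuclideanDomain.div_add_mod]
  have hquot : (f / Q).natDegree < K :=
    (natDegree_div_le_sub f Q).trans_lt (by rw [natDegree_legendreRodrigues]; omega)
  have hrem : (f % Q).degree < K := by
    simpa [degree_eq_natDegree hQ, Q, natDegree_legendreRodrigues] using degree_mod_lt f hQ
  have hnodes : ∀ ℓ, (f % Q).eval (s ℓ) = f.eval (s ℓ) := fun ℓ => by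
    rw [hdiv, (hroot ℓ).eq_zero, mul_zero, zero_add]
  rw [integral_congr fun x _ => hdiv x,
    integral_add (Continuous.intervalIntegrable (by fun_prop) _ _)
      ((Polynomial.continuous _).intervalIntegrable _ _),
    integral_mul_legendreRodrigues_eq_zero hquot,
    zero_add, integral_eq_sum_gaussWeight_of_degree_lt hs hrem]
  simp_rw [hnodes]

theorem gaussWeight_nonneg (ℓ : Fin K) : 0 ≤ gaussWeight s ℓ := by
  have hb : (Lagrange.basis Finset.univ s ℓ ^ 2).natDegree < 2 * K := by
    rw [natDegree_pow, Lagrange.natDegree_basis hs.injOn (Finset.mem_univ ℓ), Finset.card_univ,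
      Fintype.card_fin]
    have := ℓ.pos
    omega
  calc 0 ≤ ∫ x in (-1 : ℝ)..1, (Lagrange.basis Finset.univ s ℓ ^ 2).eval x :=
        integral_nonneg (by norm_num) fun x _ => by rw [eval_pow]; positivity
    _ = ∑ m, gaussWeight s m * (Lagrange.basis Finset.univ s ℓ ^ 2).eval (s m) :=
        integral_eq_sum_gaussWeight hs hroot hb
    _ = gaussWeight s ℓ := by
      rw [Fintype.sum_eq_single ℓ fun m hm => by
        rw [eval_pow, Lagrange.eval_basis_of_ne hm.symm (Finset.mem_univ m)]; ring]
      rw [eval_pow, Lagrange.eval_basis_self hs.injOn (Finset.mem_univ ℓ)]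
      ring

theorem integral_nonneg_of_nonneg_at_gaussNodes {f : ℝ[X]} (hf : f.natDegree < 2 * K) {c h : ℝ}
    (hh : 0 ≤ h) (hnodes : ∀ ℓ, 0 ≤ f.eval (c + h * s ℓ)) :
    0 ≤ ∫ x in (c - h)..(c + h), f.eval x := by
  have hlin : (C c + C h * X).natDegree ≤ 1 := by compute_degree
  have hdeg : (f.comp (C c + C h * X)).natDegree < 2 * K :=
    (natDegree_comp_le.trans ((Nat.mul_le_mul_left _ hlin).trans_eq (mul_one _))).trans_lt hf
  have hquad := integral_eq_sum_gaussWeight hs hroot hdeg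
  simp only [eval_comp, eval_add, eval_mul, eval_C, eval_X] at hquad
  have hscale :
      ∫ x in (c - h)..(c + h), f.eval x = h * ∫ t in (-1 : ℝ)..1, f.eval (c + h * t) := by
    rw [← smul_eq_mul, smul_integral_comp_add_mul (fun x => f.eval x), mul_neg_one, mul_one,
      ← sub_eq_add_neg]
  rw [hscale, hquad]
  exact mul_nonneg hh (Finset.sum_nonneg fun ℓ _ =>
    mul_nonneg (gaussWeight_nonneg hs hroot ℓ) (hnodes ℓ))

end GaussQuadrature

section AffineSubstitution

variable {g f : ℝ → ℝ} {c h a b : ℝ}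

theorem integral_eq_mul_integral_of_eq_comp_affine
    (hgf : ∀ ξ ∈ uIcc a b, g (c + h * ξ) = f ξ) :
    ∫ x in (c + h * a)..(c + h * b), g x = h * ∫ ξ in a..b, f ξ := by
  rw [← smul_integral_comp_add_mul, smul_eq_mul, integral_congr hgf]

theorem intervalIntegrable_of_eq_comp_affine (hh : h ≠ 0)
    (hgf : ∀ ξ ∈ uIcc a b, g (c + h * ξ) = f ξ) (hf : ContinuousOn f (uIcc a b)) :
    IntervalIntegrable g volume (c + h * a) (c + h * b) := by
  have hpre : (fun x => (x - c) / h) ⁻¹' uIcc a b = uIcc (c + h * a) (c + h * b) := by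
    rw [show (fun x => (x - c) / h) = (· / h) ∘ (· - c) from rfl, preimage_comp,
      preimage_div_const_uIcc hh, preimage_sub_const_uIcc, add_comm, mul_comm, add_comm (b * h),
      mul_comm b]
  have hmaps : MapsTo (fun x => (x - c) / h) (uIcc (c + h * a) (c + h * b)) (uIcc a b) :=
    hpre.ge
  refine ContinuousOn.intervalIntegrable ((hf.comp (by fun_prop) hmaps).congr fun x hx => ?_)
  rw [Function.comp_apply, ← hgf _ (hmaps hx), mul_div_cancel₀ _ hh, add_sub_cancel]

end AffineSubstitution

theorem exists_cell_eq_of_periodic {N : ℕ} (hN : 0 < N) {Δx : ℝ} {g : ℝ → ℝ}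
    (hper : Function.Periodic g (N * Δx)) {φ : Fin N → ℝ → ℝ}
    (hcell : ∀ i : Fin N, ∀ ξ ∈ Icc (-1 : ℝ) 1,
      g ((i + 1 / 2) * Δx + ξ * Δx / 2) = φ i ξ) (m : ℤ) :
    ∃ j : Fin N, ∀ ξ ∈ Icc (-1 : ℝ) 1, g ((m + 1 / 2) * Δx + Δx / 2 * ξ) = φ j ξ := by
  have hN' : (0 : ℤ) < N := by exact_mod_cast hN
  have hrem : ((m % N).toNat : ℤ) = m % N := Int.toNat_of_nonneg (Int.emod_nonneg _ hN'.ne')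
  refine ⟨⟨(m % N).toNat, by have := Int.emod_lt_of_pos m hN'; omega⟩, fun ξ hξ => ?_⟩
  have hm : (m : ℝ) = ((m % N).toNat : ℕ) + (m / N : ℤ) * N := by
    have := Int.mul_ediv_add_emod m N
    rw [← hrem] at this
    exact_mod_cast (by linarith : m = ((m % N).toNat : ℤ) + (m / N) * N)
  rw [← hcell _ ξ hξ]
  refine (congrArg g ?_).trans (hper.int_mul (m / N) _)
  rw [hm]
  ring

theorem integral_straddle_eq {g fL fR : ℝ → ℝ} {Δx ν t : ℝ} (hΔx : Δx ≠ 0)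
    (hν : ν ∈ Icc (0 : ℝ) 1)
    (hL : ∀ ξ ∈ Icc (-1 : ℝ) 1, g ((t - 1 + 1 / 2) * Δx + Δx / 2 * ξ) = fL ξ)
    (hR : ∀ ξ ∈ Icc (-1 : ℝ) 1, g ((t + 1 / 2) * Δx + Δx / 2 * ξ) = fR ξ)
    (hfL : Continuous fL) (hfR : Continuous fR) :
    ∫ x in ((t - ν) * Δx)..((t + 1 - ν) * Δx), g x
      = Δx / 2 * ((∫ ξ in (1 - 2 * ν)..1, fL ξ)
          + ∫ ξ in (-1 : ℝ)..(1 - 2 * ν), fR ξ) := by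
  obtain ⟨hν0, hν1⟩ := hν
  have hmem : 1 - 2 * ν ∈ Icc (-1 : ℝ) 1 := ⟨by linarith, by linarith⟩
  have hL' : ∀ ξ ∈ uIcc (1 - 2 * ν) 1, g ((t - 1 + 1 / 2) * Δx + Δx / 2 * ξ) = fL ξ :=
    fun ξ hξ => hL ξ (uIcc_subset_Icc hmem (right_mem_Icc.2 (by norm_num)) hξ)
  have hR' : ∀ ξ ∈ uIcc (-1) (1 - 2 * ν), g ((t + 1 / 2) * Δx + Δx / 2 * ξ) = fR ξ :=
    fun ξ hξ => hR ξ (uIcc_subset_Icc (left_mem_Icc.2 (by norm_num)) hmem hξ)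
  have hmid : (t - 1 + 1 / 2) * Δx + Δx / 2 * 1 = (t + 1 / 2) * Δx + Δx / 2 * (-1) := by ring
  have hintL := intervalIntegrable_of_eq_comp_affine (div_ne_zero hΔx two_ne_zero) hL'
    hfL.continuousOn
  have hintR := intervalIntegrable_of_eq_comp_affine (div_ne_zero hΔx two_ne_zero) hR'
    hfR.continuousOn
  rw [← hmid] at hintR
  rw [show (t - ν) * Δx = (t - 1 + 1 / 2) * Δx + Δx / 2 * (1 - 2 * ν) by ring,
    show (t + 1 - ν) * Δx = (t + 1 / 2) * Δx + Δx / 2 * (1 - 2 * ν) by ring,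
    ← integral_add_adjacent_intervals hintL hintR,
    integral_eq_mul_integral_of_eq_comp_affine hL', hmid,
    integral_eq_mul_integral_of_eq_comp_affine hR', mul_add]

theorem shift_project_positivity_in_mean_general (M K : ℕ) (hM : 1 ≤ M) (hK : K = (M + 1) / 2)
    (s : Fin K → ℝ) (hs : StrictMono s)
    (hroot : ∀ ℓ : Fin K,
      (Polynomial.derivative^[K] (((Polynomial.X : Polynomial ℝ) ^ 2 - 1) ^ K)).IsRoot (s ℓ))
    (ν : ℝ) (hν : ν ∈ Set.Icc (0 : ℝ) 1)
    (Δx : ℝ) (hΔx : 0 < Δx) (N : ℕ)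
    (g : ℝ → ℝ) (hper : Function.Periodic g ((N : ℝ) * Δx))
    (p : Fin N → Polynomial ℝ)
    (hdeg : ∀ i : Fin N, (p i).natDegree ≤ M - 1)
    (hcell : ∀ i : Fin N, ∀ ξ ∈ Set.Icc (-1 : ℝ) 1,
      g (((i : ℕ) + 1 / 2) * Δx + ξ * Δx / 2) = (p i).eval ξ)
    (hposL : ∀ i : Fin N, ∀ ℓ : Fin K, 0 ≤ (p i).eval ((1 - ν) * s ℓ - ν))
    (hposR : ∀ i : Fin N, ∀ ℓ : Fin K, 0 ≤ (p i).eval (1 - ν + ν * s ℓ)) :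
    ∀ (I : ℤ) (i : Fin N),
      0 ≤ ∫ x in ((i : ℕ) * Δx)..(((i : ℕ) + 1) * Δx), g (x - ((I : ℝ) + ν) * Δx) := by
  intro I i
  have hdeg_lt : ∀ j, (p j).natDegree < 2 * K := fun j => by have := hdeg j; omega
  have hleft : ∀ j, 0 ≤ ∫ ξ in (-1 : ℝ)..(1 - 2 * ν), (p j).eval ξ := fun j => by
    have := integral_nonneg_of_nonneg_at_gaussNodes hs.injective hroot (hdeg_lt j)
      (c := -ν) (h := 1 - ν) (by linarith [hν.2]) fun ℓ => by
        rw [neg_add_eq_sub]; exact hposL j ℓ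
    rwa [show -ν - (1 - ν) = -1 by ring, show -ν + (1 - ν) = 1 - 2 * ν by ring] at this
  have hright : ∀ j, 0 ≤ ∫ ξ in (1 - 2 * ν)..1, (p j).eval ξ := fun j => by
    have := integral_nonneg_of_nonneg_at_gaussNodes hs.injective hroot (hdeg_lt j) hν.1 (hposR j)
    rwa [show 1 - ν - ν = 1 - 2 * ν by ring, sub_add_cancel] at this
  have hcells := exists_cell_eq_of_periodic i.pos hper (φ := fun j ξ => (p j).eval ξ) hcell
  obtain ⟨jL, hjL⟩ := hcells (i - I - 1)
  obtain ⟨jR, hjR⟩ := hcells (i - I)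
  have hshift : ∫ x in ((i : ℕ) * Δx)..(((i : ℕ) + 1) * Δx), g (x - ((I : ℝ) + ν) * Δx)
      = ∫ x in ((((i - I : ℤ) : ℝ) - ν) * Δx)..((((i - I : ℤ) : ℝ) + 1 - ν) * Δx),
          g x := by
    rw [integral_comp_sub_right]
    congr 1 <;> push_cast <;> ring
  rw [hshift, integral_straddle_eq hΔx.ne' hν (fun ξ hξ => by exact_mod_cast hjL ξ hξ) hjR
    (p jL).continuous (p jR).continuous]
  exact mul_nonneg (by positivity) (add_nonneg (hright jL) (hleft jR))

/-- Positivity in the mean for the shift-and-project semi-Lagrangian DG step: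
if the broken piecewise polynomial (degree `≤ M-1`) periodic function `g` is nonnegative
at the `K = ⌈M/2⌉` Gauss–Legendre nodes of each of the two reference subintervals
`[-1, 1-2ν]` and `[1-2ν, 1]` of every cell, then every cell average of the shifted
function is nonnegative, independent of the size of the shift. -/
theorem shift_project_positivity_in_mean (M K : ℕ) (hM : 1 ≤ M) (hK : K = (M + 1) / 2)
    (s : Fin K → ℝ) (hs : StrictMono s)
    (hroot : ∀ ℓ : Fin K,
      (Polynomial.derivative^[K] (((Polynomial.X : Polynomial ℝ) ^ 2 - 1) ^ K)).IsRoot (s ℓ))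
    (ν : ℝ) (hν : ν ∈ Set.Icc (0 : ℝ) 1)
    (Δx : ℝ) (hΔx : 0 < Δx) (N : ℕ) (hN : 1 ≤ N)
    (g : ℝ → ℝ) (hper : Function.Periodic g ((N : ℝ) * Δx))
    (p : Fin N → Polynomial ℝ)
    (hdeg : ∀ i : Fin N, (p i).natDegree ≤ M - 1)
    (hcell : ∀ i : Fin N, ∀ ξ ∈ Set.Icc (-1 : ℝ) 1,
      g (((i : ℕ) + 1 / 2) * Δx + ξ * Δx / 2) = (p i).eval ξ)
    (hposL : ∀ i : Fin N, ∀ ℓ : Fin K, 0 ≤ (p i).eval ((1 - ν) * s ℓ - ν))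
    (hposR : ∀ i : Fin N, ∀ ℓ : Fin K, 0 ≤ (p i).eval (1 - ν + ν * s ℓ)) :
    ∀ (I : ℤ) (i : Fin N),
      0 ≤ ∫ x in ((i : ℕ) * Δx)..(((i : ℕ) + 1) * Δx), g (x - ((I : ℝ) + ν) * Δx) :=
  shift_project_positivity_in_mean_general M K hM hK s hs hroot ν hν Δx hΔx N g hper p hdeg hcell
    hposL hposR
end

section
/- Let K ≥ 1 and let s_1 < … < s_K be the roots of the polynomial q_K(x) = (d/dx)^K [(x² − 1)^K]. If p is a real polynomial with deg p ≤ 2K − 1 and p(s_ℓ) ≥ 0 for every ℓ ∈ {1,…,K}, then ∫_{−1}^{1} p(x) dx ≥ 0. -/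
/-!
Integrating by parts `K` times shows that `q_K = D^K (X² - 1)^K` is orthogonal on `[-1, 1]` to
every polynomial of degree `< K`. Since `q_K` has degree `K`, it is a nonzero multiple of the
nodal polynomial `∏ (X - s_ℓ)`, so every polynomial of degree `< 2K` vanishing at the nodes is
`q_K` times a polynomial of degree `< K` and integrates to zero. Consequently a polynomial of
degree `< 2K` has the same integral as its Lagrange interpolant at the nodes, and the Lagrange
basis polynomial `L_ℓ` has the same integral as `L_ℓ²`, which is nonnegative.
-/

open Polynomial

namespace Polynomial

theorem natDegree_iterate_derivative_eq {R : Type*} [Semiring R] [IsAddTorsionFree R]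
    (p : R[X]) (k : ℕ) : (derivative^[k] p).natDegree = p.natDegree - k := by
  induction k with
  | zero => rfl
  | succ k ih => rw [Function.iterate_succ_apply', natDegree_derivative, ih, Nat.sub_sub]

theorem eval_iterate_derivative_eq_zero_of_pow_dvd {R : Type*} [CommRing R] {u : R[X]} {a : R}
    {m n : ℕ} (h : (X - C a) ^ n ∣ u) (hm : m < n) : (derivative^[m] u).eval a = 0 :=
  dvd_iff_isRoot.mp <| (dvd_pow_self _ (Nat.sub_ne_zero_of_lt hm)).trans
    (pow_sub_dvd_iterate_derivative_of_pow_dvd m h)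

theorem intervalIntegral_derivative_mul_eq (u g : ℝ[X]) (a b : ℝ) :
    ∫ x in a..b, (derivative u).eval x * g.eval x =
      u.eval b * g.eval b - u.eval a * g.eval a - ∫ x in a..b, u.eval x * (derivative g).eval x := by
  simpa only [mul_comm] using intervalIntegral.integral_mul_deriv_eq_deriv_mul (fun x _ => g.hasDerivAt x)
    (fun x _ => u.hasDerivAt x) (g.derivative.continuous.intervalIntegrable a b)
    (u.derivative.continuous.intervalIntegrable a b)

theorem intervalIntegral_iterate_derivative_mul_eq_zero {a b : ℝ} {n : ℕ} {u g : ℝ[X]}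
    (ha : (X - C a) ^ n ∣ u) (hb : (X - C b) ^ n ∣ u) (hg : derivative^[n] g = 0) :
    ∫ x in a..b, (derivative^[n] u).eval x * g.eval x = 0 := by
  induction n generalizing g with
  | zero => simp_all
  | succ n ih =>
    rw [Function.iterate_succ_apply] at hg
    rw [Function.iterate_succ_apply', intervalIntegral_derivative_mul_eq,
      eval_iterate_derivative_eq_zero_of_pow_dvd ha n.lt_succ_self,
      eval_iterate_derivative_eq_zero_of_pow_dvd hb n.lt_succ_self,
      ih ((pow_dvd_pow _ n.le_succ).trans ha) ((pow_dvd_pow _ n.le_succ).trans hb) hg]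
    simp

end Polynomial

namespace GaussQuadrature

structure IsGaussNodes (a b : ℝ) (q : ℝ[X]) {K : ℕ} (s : Fin K → ℝ) : Prop where
  natDegree_eq : q.natDegree = K
  orthogonal : ∀ g : ℝ[X], g.natDegree < K → ∫ x in a..b, q.eval x * g.eval x = 0
  injective : Function.Injective s
  isRoot : ∀ i, q.IsRoot (s i)

variable {a b : ℝ} {K : ℕ} {q : ℝ[X]} {s : Fin K → ℝ}

theorem nodal_dvd_of_eval_eq_zero (hs : Function.Injective s) {f : ℝ[X]}
    (hf : ∀ i, f.eval (s i) = 0) : Lagrange.nodal Finset.univ s ∣ f := by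
  rw [Lagrange.nodal_eq]
  exact Fintype.prod_dvd_of_coprime (pairwise_coprime_X_sub_C hs) fun i => dvd_iff_isRoot.2 (hf i)

namespace IsGaussNodes

theorem intervalIntegral_eq_zero_of_eval_eq_zero (h : IsGaussNodes a b q s) {f : ℝ[X]}
    (hf : f.natDegree < 2 * K) (hfs : ∀ i, f.eval (s i) = 0) : ∫ x in a..b, f.eval x = 0 := by
  set w := Lagrange.nodal Finset.univ s
  have hw : w.natDegree = K := by simp [w, Lagrange.natDegree_nodal]
  have hq0 : q ≠ 0 := by rintro rfl; rw [← h.natDegree_eq, natDegree_zero] at hf; omega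
  have hqw : q = C q.leadingCoeff * w := eq_leadingCoeff_mul_of_monic_of_dvd_of_natDegree_le
    Lagrange.nodal_monic (nodal_dvd_of_eval_eq_zero h.injective h.isRoot)
    (h.natDegree_eq.trans hw.symm).le
  obtain ⟨e, rfl⟩ := nodal_dvd_of_eval_eq_zero h.injective hfs
  have he : e.natDegree < K := by
    rcases eq_or_ne e 0 with rfl | he
    · rw [natDegree_zero]; omega
    · rw [natDegree_mul Lagrange.nodal_ne_zero he, hw] at hf; omega
  have hmul : q.leadingCoeff * ∫ x in a..b, (w * e).eval x = 0 := by
    rw [← intervalIntegral.integral_const_mul, ← h.orthogonal e he]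
    congr 1 with x
    conv_rhs => rw [hqw]
    simp only [eval_mul, eval_C, mul_assoc]
  exact (mul_eq_zero.mp hmul).resolve_left (leadingCoeff_ne_zero.mpr hq0)

theorem intervalIntegral_eq_sum_eval_mul_intervalIntegral_basis (h : IsGaussNodes a b q s)
    {f : ℝ[X]} (hf : f.natDegree < 2 * K) :
    ∫ x in a..b, f.eval x =
      ∑ i, f.eval (s i) * ∫ x in a..b, (Lagrange.basis Finset.univ s i).eval x := by
  set r := Lagrange.interpolate Finset.univ s fun i => f.eval (s i)
  have hr : r.natDegree < K := by
    have := Lagrange.degree_interpolate_lt (s := Finset.univ) (fun i => f.eval (s i))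
      h.injective.injOn
    rcases eq_or_ne r 0 with hr | hr
    · rw [hr, natDegree_zero]; omega
    · rw [Finset.card_univ, Fintype.card_fin] at this
      exact (natDegree_lt_iff_degree_lt hr).2 this
  have hfr : ∫ x in a..b, (f - r).eval x = 0 :=
    h.intervalIntegral_eq_zero_of_eval_eq_zero
      ((natDegree_sub_le _ _).trans_lt (max_lt hf (by omega))) fun i => by
        rw [eval_sub, Lagrange.eval_interpolate_at_node _ h.injective.injOn (Finset.mem_univ i),
          sub_self]
  simp only [eval_sub] at hfr
  rw [intervalIntegral.integral_sub (f.continuous.intervalIntegrable a b)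
    (r.continuous.intervalIntegrable a b), sub_eq_zero] at hfr
  simp only [hfr, r, Lagrange.interpolate_apply, eval_finsetSum, eval_mul, eval_C]
  rw [intervalIntegral.integral_finsetSum fun i _ =>
    ((Lagrange.basis _ s i).continuous.intervalIntegrable a b).const_mul _]
  simp_rw [intervalIntegral.integral_const_mul]

theorem intervalIntegral_basis_nonneg (h : IsGaussNodes a b q s) (hab : a ≤ b) (i : Fin K) :
    0 ≤ ∫ x in a..b, (Lagrange.basis Finset.univ s i).eval x := by
  set L := Lagrange.basis Finset.univ s i
  have hL : L.natDegree = K - 1 := by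
    simpa using Lagrange.natDegree_basis h.injective.injOn (Finset.mem_univ i)
  have hdeg : (L ^ 2 - L).natDegree < 2 * K := by
    have := i.pos
    exact (natDegree_sub_le _ _).trans_lt
      (max_lt (by rw [natDegree_pow, hL]; omega) (by rw [hL]; omega))
  have hnodes : ∀ j, (L ^ 2 - L).eval (s j) = 0 := by
    intro j
    rcases eq_or_ne i j with rfl | hij
    · simp [L, Lagrange.eval_basis_self h.injective.injOn (Finset.mem_univ i)]
    · simp [L, Lagrange.eval_basis_of_ne hij (Finset.mem_univ j)]
  have hsq := h.intervalIntegral_eq_zero_of_eval_eq_zero hdeg hnodes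
  simp only [eval_sub] at hsq
  rw [intervalIntegral.integral_sub ((L ^ 2).continuous.intervalIntegrable a b)
    (L.continuous.intervalIntegrable a b), sub_eq_zero] at hsq
  rw [← hsq]
  exact intervalIntegral.integral_nonneg hab fun x _ => by rw [eval_pow]; exact sq_nonneg _

theorem intervalIntegral_nonneg_of_eval_nonneg (h : IsGaussNodes a b q s) (hab : a ≤ b)
    {f : ℝ[X]} (hf : f.natDegree < 2 * K) (hfs : ∀ i, 0 ≤ f.eval (s i)) :
    0 ≤ ∫ x in a..b, f.eval x := by
  rw [h.intervalIntegral_eq_sum_eval_mul_intervalIntegral_basis hf]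
  exact Finset.sum_nonneg fun i _ => mul_nonneg (hfs i) (h.intervalIntegral_basis_nonneg hab i)

end IsGaussNodes

end GaussQuadrature

/-- Positivity of Gauss–Legendre quadrature: a real polynomial of degree `≤ 2K - 1`
that is nonnegative at the `K` Gauss–Legendre nodes has nonnegative integral over
`[-1, 1]`. -/
theorem gauss_legendre_positivity (K : ℕ) (hK : 1 ≤ K)
    (s : Fin K → ℝ) (hs : StrictMono s)
    (hroot : ∀ ℓ : Fin K,
      (Polynomial.derivative^[K] (((Polynomial.X : Polynomial ℝ) ^ 2 - 1) ^ K)).IsRoot (s ℓ))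
    (p : Polynomial ℝ) (hdeg : p.natDegree ≤ 2 * K - 1)
    (hpos : ∀ ℓ : Fin K, 0 ≤ p.eval (s ℓ)) :
    0 ≤ ∫ x in (-1 : ℝ)..1, p.eval x := by
  have hfactor : ((X : ℝ[X]) ^ 2 - 1) ^ K = (X - C (-1)) ^ K * (X - C 1) ^ K := by
    rw [← mul_pow, map_neg, map_one]
    ring
  have hqdeg : (derivative^[K] (((X : ℝ[X]) ^ 2 - 1) ^ K)).natDegree = K := by
    rw [natDegree_iterate_derivative_eq, natDegree_pow, ← C_1, natDegree_X_pow_sub_C]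
    omega
  have horth (g : ℝ[X]) (hg : g.natDegree < K) :
      ∫ x in (-1 : ℝ)..1, (derivative^[K] (((X : ℝ[X]) ^ 2 - 1) ^ K)).eval x * g.eval x = 0 := by
    rw [hfactor]
    exact intervalIntegral_iterate_derivative_mul_eq_zero (dvd_mul_right _ _) (dvd_mul_left _ _)
      (iterate_derivative_eq_zero hg)
  exact GaussQuadrature.IsGaussNodes.intervalIntegral_nonneg_of_eval_nonneg
    ⟨hqdeg, horth, hs.injective, hroot⟩ (by norm_num) (by omega) hpos
end

section
/- Let f : ℝ × ℝ × ℝ → ℝ be C¹ with support contained in {(t,x,v) : |v| ≤ R} for some R > 0, let E : ℝ × ℝ → ℝ be continuous, and suppose ∂_t f + v ∂_x f + E(t,x) ∂_v f = 0 everywhere. Suppose moreover that ∂_t E(t,x) exists and equals −m(t,x) for all (t,x), where m = ∫_ℝ v f dv. Then E is twice differentiable in t and ∂_t² E(t,x) = ∂_x 𝔼(t,x) − ρ(t,x) E(t,x) for all (t,x), where ρ = ∫_ℝ f dv and 𝔼 = ∫_ℝ v² f dv. -/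
/-!
Since `∂_t E = -m`, we need `∂_t m = ρ E - ∂_x 𝔼`, the momentum balance law. As `f` is `C¹` with
velocity support in `[-R, R]`, the moments may be differentiated under the integral sign, so
`∂_t m = ∫ v ∂_t f`. Multiplying the Vlasov equation by `v` and integrating gives
`∫ v ∂_t f = -∂_x 𝔼 - E ∫ v ∂_v f`, and integration by parts turns `∫ v ∂_v f` into `-ρ`.
-/

open MeasureTheory Set Function

theorem integral_id_mul_deriv_eq_neg_integral {φ : ℝ → ℝ} (hφ : ContDiff ℝ 1 φ)
    (hc : HasCompactSupport φ) : ∫ v, v * deriv φ v = -∫ v, φ v := by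
  simpa using integral_mul_deriv_eq_deriv_mul_of_integrable (u := id) (u' := fun _ => 1)
    (fun v _ => hasDerivAt_id v) (fun v _ => (hφ.differentiable one_ne_zero v).hasDerivAt)
    ((continuous_id.mul (hφ.continuous_deriv le_rfl)).integrable_of_hasCompactSupport
      hc.deriv.mul_left)
    (by simpa [Pi.mul_def] using hφ.continuous.integrable_of_hasCompactSupport hc)
    ((continuous_id.mul hφ.continuous).integrable_of_hasCompactSupport hc.mul_left)

section Parametric

variable {g : ℝ → ℝ → ℝ}

theorem hasDerivAt_fst_of_contDiff (hg : ContDiff ℝ 1 (uncurry g)) (s v : ℝ) :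
    HasDerivAt (g · v) (fderiv ℝ (uncurry g) (s, v) (1, 0)) s :=
  HasFDerivAt.comp_hasDerivAt (l := uncurry g) s
    (hg.differentiable one_ne_zero (s, v)).hasFDerivAt
    ((hasDerivAt_id' s).prodMk (hasDerivAt_const s v))

theorem continuous_deriv_fst_of_contDiff (hg : ContDiff ℝ 1 (uncurry g)) :
    Continuous (uncurry fun s v => deriv (g · v) s) := by
  have h : (uncurry fun s v => deriv (g · v) s) = fun p => fderiv ℝ (uncurry g) p (1, 0) :=
    funext fun p => (hasDerivAt_fst_of_contDiff hg p.1 p.2).deriv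
  rw [h]
  exact (hg.continuous_fderiv one_ne_zero).clm_apply continuous_const

theorem hasDerivAt_integral_of_contDiff_of_isCompact (hg : ContDiff ℝ 1 (uncurry g))
    {K : Set ℝ} (hK : IsCompact K) (hgK : ∀ s, ∀ v ∉ K, g s v = 0) (s₀ : ℝ) :
    Integrable (fun v => deriv (g · v) s₀) ∧
      HasDerivAt (fun s => ∫ v, g s v) (∫ v, deriv (g · v) s₀) s₀ := by
  have hg' := continuous_deriv_fst_of_contDiff hg
  have hg'K : ∀ s, ∀ v ∉ K, deriv (g · v) s = 0 := fun s v hv => by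
    simp [funext fun s => hgK s v hv]
  obtain ⟨C, hC⟩ := ((isCompact_closedBall s₀ 1).prod hK).exists_bound_of_continuousOn
    hg'.continuousOn
  refine hasDerivAt_integral_of_dominated_loc_of_deriv_le (bound := K.indicator fun _ => C)
    (Metric.closedBall_mem_nhds s₀ one_pos)
    (.of_forall fun s => (hg.continuous.comp (.prodMk_right s)).aestronglyMeasurable)
    ((hg.continuous.comp (.prodMk_right s₀)).integrable_of_hasCompactSupport
      (.intro hK (hgK s₀)))
    (hg'.comp (.prodMk_right s₀)).aestronglyMeasurable
    (.of_forall fun v s hs => ?_)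
    ((integrable_indicator_iff hK.measurableSet).2 (integrableOn_const hK.measure_lt_top.ne))
    (.of_forall fun v s _ => (hasDerivAt_fst_of_contDiff hg s v).differentiableAt.hasDerivAt)
  by_cases hv : v ∈ K
  · rw [indicator_of_mem hv]
    exact hC (s, v) ⟨hs, hv⟩
  · rw [indicator_of_notMem hv, hg'K s v hv, norm_zero]

end Parametric

theorem hasDerivAt_firstMoment_of_vlasov {R : ℝ} {f : ℝ → ℝ → ℝ → ℝ} {E : ℝ → ℝ → ℝ}
    (hf : ContDiff ℝ 1 (fun p : ℝ × ℝ × ℝ => f p.1 p.2.1 p.2.2))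
    (hsupp : ∀ t x v : ℝ, R < |v| → f t x v = 0) {t x : ℝ}
    (hVlasov : ∀ v : ℝ,
      deriv (fun s => f s x v) t + v * deriv (fun y => f t y v) x +
        E t x * deriv (fun w => f t x w) v = 0) :
    HasDerivAt (fun s => ∫ v, v * f s x v)
      ((∫ v, f t x v) * E t x - deriv (fun y => ∫ v, v ^ 2 * f t y v) x) t := by
  have hcomp {X : Type} [NormedAddCommGroup X] [NormedSpace ℝ X] {γ : X → ℝ × ℝ × ℝ}
      (hγ : ContDiff ℝ 1 γ) : ContDiff ℝ 1 fun r => f (γ r).1 (γ r).2.1 (γ r).2.2 :=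
    hf.comp hγ
  have hK : ∀ s y, ∀ v ∉ Metric.closedBall (0 : ℝ) R, f s y v = 0 := fun s y v hv =>
    hsupp s y v (by simpa using hv)
  obtain ⟨-, hm⟩ := hasDerivAt_integral_of_contDiff_of_isCompact (g := fun s v => v * f s x v)
    (contDiff_snd.mul (hcomp (γ := fun p : ℝ × ℝ => (p.1, x, p.2)) (by fun_prop)))
    (isCompact_closedBall 0 R) (fun s v hv => by simp [hK s x v hv]) t
  obtain ⟨hint_x, h𝔼⟩ := hasDerivAt_integral_of_contDiff_of_isCompact
    (g := fun y v => v ^ 2 * f t y v)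
    ((contDiff_snd.pow 2).mul (hcomp (γ := fun p : ℝ × ℝ => (t, p.1, p.2)) (by fun_prop)))
    (isCompact_closedBall 0 R) (fun y v hv => by simp [hK t y v hv]) x
  have hfv : ContDiff ℝ 1 (f t x) := hcomp (γ := fun v => (t, x, v)) (by fun_prop)
  have hsupp_v : HasCompactSupport (f t x) := .intro (isCompact_closedBall 0 R) (hK t x)
  have hint_v : Integrable fun v => v * deriv (f t x) v :=
    (continuous_id.mul (hfv.continuous_deriv le_rfl)).integrable_of_hasCompactSupport
      hsupp_v.deriv.mul_left
  have hmoment (v : ℝ) : deriv (fun s => v * f s x v) t =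
      -deriv (fun y => v ^ 2 * f t y v) x - E t x * (v * deriv (f t x) v) := by
    rw [deriv_const_mul _ ((hcomp (γ := fun s => (s, x, v)) (by fun_prop)).differentiable
        one_ne_zero t),
      deriv_const_mul _ ((hcomp (γ := fun y => (t, y, v)) (by fun_prop)).differentiable
        one_ne_zero x)]
    linear_combination v * hVlasov v
  refine hm.congr_deriv ?_
  rw [integral_congr_ae (.of_forall hmoment), integral_sub hint_x.fun_neg (hint_v.const_mul _),
    integral_neg, integral_const_mul, integral_id_mul_deriv_eq_neg_integral hfv hsupp_v,
    h𝔼.deriv]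
  ring

theorem vlasov_Efield_second_time_derivative_general (R : ℝ)
    (f : ℝ → ℝ → ℝ → ℝ) (E : ℝ → ℝ → ℝ)
    (hf : ContDiff ℝ 1 (fun p : ℝ × ℝ × ℝ => f p.1 p.2.1 p.2.2))
    (hsupp : ∀ t x v : ℝ, R < |v| → f t x v = 0)
    (hVlasov : ∀ t x v : ℝ,
      deriv (fun s => f s x v) t + v * deriv (fun y => f t y v) x +
        E t x * deriv (fun w => f t x w) v = 0)
    (hEt : ∀ t x : ℝ, HasDerivAt (fun s => E s x) (-(∫ v : ℝ, v * f t x v)) t) :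
    ∀ t x : ℝ,
      HasDerivAt (fun s => deriv (fun r => E r x) s)
        (deriv (fun y => ∫ v : ℝ, v ^ 2 * f t y v) x - (∫ v : ℝ, f t x v) * E t x) t := by
  intro t x
  rw [funext fun s => (hEt s x).deriv]
  exact (hasDerivAt_firstMoment_of_vlasov hf hsupp (hVlasov t x)).neg.congr_deriv (by ring)

/-- If `∂_t E = −m`, then the electric field is twice differentiable in time and
`∂_t² E = ∂_x 𝔼 − ρ E`. -/
theorem vlasov_Efield_second_time_derivative (R : ℝ) (hR : 0 < R)
    (f : ℝ → ℝ → ℝ → ℝ) (E : ℝ → ℝ → ℝ)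
    (hf : ContDiff ℝ 1 (fun p : ℝ × ℝ × ℝ => f p.1 p.2.1 p.2.2))
    (hsupp : ∀ t x v : ℝ, R < |v| → f t x v = 0)
    (hE : Continuous (fun p : ℝ × ℝ => E p.1 p.2))
    (hVlasov : ∀ t x v : ℝ,
      deriv (fun s => f s x v) t + v * deriv (fun y => f t y v) x +
        E t x * deriv (fun w => f t x w) v = 0)
    (hEt : ∀ t x : ℝ, HasDerivAt (fun s => E s x) (-(∫ v : ℝ, v * f t x v)) t) :
    ∀ t x : ℝ,
      HasDerivAt (fun s => deriv (fun r => E r x) s)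
        (deriv (fun y => ∫ v : ℝ, v ^ 2 * f t y v) x - (∫ v : ℝ, f t x v) * E t x) t :=
  vlasov_Efield_second_time_derivative_general R f E hf hsupp hVlasov hEt
end

section
/- Let f : ℝ × ℝ × ℝ → ℝ be C² with support contained in {(t,x,v) : |v| ≤ R} for some R > 0, let E : ℝ × ℝ → ℝ be C¹, and suppose ∂_t f + v ∂_x f + E(t,x) ∂_v f = 0 everywhere as well as ∂_t E(t,x) = −m(t,x) for all (t,x), where m = ∫_ℝ v f dv. Then E is three times differentiable in t and ∂_t³ E(t,x) = 2 ∂_x( m(t,x) E(t,x) ) − ∂_x² 𝔽(t,x) + E(t,x) ∂_x m(t,x) + ρ(t,x) m(t,x) for all (t,x), where ρ = ∫_ℝ f dv and 𝔽 = ∫_ℝ v³ f dv. -/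
/-!
Multiplying the Vlasov equation by `v ^ j` and integrating in `v`, with the force term integrated
by parts, gives the moment hierarchy `∂ₜ Mⱼ + ∂ₓ Mⱼ₊₁ = j E Mⱼ₋₁` for `Mⱼ = ∫ vʲ f dv`. Together
with `∂ₜ E = -m` the momentum equation (`j = 1`) gives `∂ₜ² E = ∂ₓ 𝔼 - E ρ`. Differentiating once
more, the mixed partials of the `C²` moment `𝔼` commute, so `∂ₜ ∂ₓ 𝔼 = ∂ₓ ∂ₜ 𝔼`, which the energy
equation (`j = 2`) evaluates; the continuity equation (`j = 0`) and `∂ₜ E = -m` handle `∂ₜ (E ρ)`.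
-/

open MeasureTheory Function Set Metric

section PartialDerivatives

variable {V W F : Type*} [NormedAddCommGroup V] [NormedSpace ℝ V] [NormedAddCommGroup W]
  [NormedSpace ℝ W] [NormedAddCommGroup F] [NormedSpace ℝ F]

theorem hasDerivAt_fst_of_differentiableAt {u : ℝ → V → F} {s : ℝ} {v : V}
    (hu : DifferentiableAt ℝ (uncurry u) (s, v)) :
    HasDerivAt (u · v) (fderiv ℝ (uncurry u) (s, v) (1, 0)) s :=
  hu.hasFDerivAt.comp_hasDerivAt (f := fun s => (s, v)) s
    ((hasDerivAt_id s).prodMk (hasDerivAt_const s v))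

theorem hasDerivAt_snd_of_differentiableAt {u : W → ℝ → F} {w : W} {y : ℝ}
    (hu : DifferentiableAt ℝ (uncurry u) (w, y)) :
    HasDerivAt (u w) (fderiv ℝ (uncurry u) (w, y) (0, 1)) y :=
  hu.hasFDerivAt.comp_hasDerivAt (f := fun y => (w, y)) y
    ((hasDerivAt_const y w).prodMk (hasDerivAt_id y))

theorem continuous_uncurry_deriv_fst {u : ℝ → V → F} (hu : ContDiff ℝ 1 (uncurry u)) :
    Continuous (uncurry fun s v => deriv (u · v) s) := by
  have h : (uncurry fun s v => deriv (u · v) s) = fun p => fderiv ℝ (uncurry u) p (1, 0) :=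
    funext fun p => (hasDerivAt_fst_of_differentiableAt (hu.differentiable one_ne_zero p)).deriv
  rw [h]
  exact (hu.continuous_fderiv one_ne_zero).clm_apply continuous_const

theorem hasDerivAt_deriv_snd_of_hasDerivAt_deriv_fst {u : ℝ → ℝ → ℝ}
    (hu : ContDiff ℝ 2 (uncurry u)) {t x a : ℝ}
    (ha : HasDerivAt (fun y => deriv (u · y) t) a x) :
    HasDerivAt (fun s => deriv (u s) x) a t := by
  set D := fderiv ℝ (uncurry u)
  have hu1 : Differentiable ℝ (uncurry u) := hu.differentiable two_ne_zero
  have hD : Differentiable ℝ D := (hu.fderiv_right (m := 1) le_rfl).differentiable one_ne_zero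
  have h_fst : (fun y => deriv (u · y) t) = fun y => D (t, y) (1, 0) :=
    funext fun y => (hasDerivAt_fst_of_differentiableAt (hu1 _)).deriv
  have h_snd : (fun s => deriv (u s) x) = fun s => D (s, x) (0, 1) :=
    funext fun s => (hasDerivAt_snd_of_differentiableAt (hu1 _)).deriv
  have hD_fst : HasDerivAt (fun s => D (s, x) (0, 1)) (fderiv ℝ D (t, x) (1, 0) (0, 1)) t := by
    simpa using (hasDerivAt_fst_of_differentiableAt (u := curry D) (hD _)).clm_apply
      (hasDerivAt_const t ((0 : ℝ), (1 : ℝ)))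
  have hD_snd : HasDerivAt (fun y => D (t, y) (1, 0)) (fderiv ℝ D (t, x) (0, 1) (1, 0)) x := by
    simpa using (hasDerivAt_snd_of_differentiableAt (u := curry D) (hD _)).clm_apply
      (hasDerivAt_const x ((1 : ℝ), (0 : ℝ)))
  have hsymm := (hu.contDiffAt (x := (t, x))).isSymmSndFDerivAt (by simp)
  rw [h_fst] at ha
  rw [h_snd, ha.unique hD_snd, hsymm.eq]
  exact hD_fst

end PartialDerivatives

section ParametricIntegral

variable {V : Type*} [NormedAddCommGroup V] [NormedSpace ℝ V] [MeasurableSpace V] [BorelSpace V]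
  {μ : Measure V} [IsFiniteMeasureOnCompacts μ] {K : Set V}

theorem hasDerivAt_integral_of_contDiff {g : ℝ → V → ℝ} (hg : ContDiff ℝ 1 (uncurry g))
    (hK : IsCompact K) (hgK : ∀ s, ∀ v ∉ K, g s v = 0) (s₀ : ℝ) :
    HasDerivAt (fun s => ∫ v, g s v ∂μ) (∫ v, deriv (g · v) s₀ ∂μ) s₀ := by
  set g' : ℝ → V → ℝ := fun s v => deriv (g · v) s
  have hg'c : Continuous (uncurry g') := continuous_uncurry_deriv_fst hg
  have hg'K : ∀ s, ∀ v ∉ K, g' s v = 0 := fun s v hv => by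
    simp only [g', hgK _ v hv, deriv_const']
  have hgc : ∀ s, Continuous (g s) := fun s => hg.continuous.comp (Continuous.prodMk_right s)
  obtain ⟨C, hC⟩ := ((isCompact_closedBall s₀ 1).prod hK).exists_bound_of_continuousOn
    hg'c.continuousOn
  have h_bound : ∀ v, ∀ s ∈ ball s₀ 1, ‖g' s v‖ ≤ K.indicator (fun _ => C) v := by
    intro v s hs
    by_cases hv : v ∈ K
    · rw [indicator_of_mem hv]
      exact hC (s, v) ⟨ball_subset_closedBall hs, hv⟩
    · rw [indicator_of_notMem hv, hg'K s v hv, norm_zero]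
  exact (hasDerivAt_integral_of_dominated_loc_of_deriv_le (ball_mem_nhds s₀ one_pos)
    (.of_forall fun s => (hgc s).aestronglyMeasurable)
    ((hgc s₀).integrable_of_hasCompactSupport (HasCompactSupport.intro hK (hgK s₀)))
    (hg'c.comp (Continuous.prodMk_right s₀)).aestronglyMeasurable (ae_of_all _ h_bound)
    ((integrableOn_const hK.measure_lt_top.ne).integrable_indicator hK.isClosed.measurableSet)
    (ae_of_all _ fun v s _ => (((hg.differentiable one_ne_zero).comp
      (differentiable_id.prodMk (differentiable_const v)) s).hasDerivAt))).2

end ParametricIntegral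

theorem contDiff_integral_of_contDiff {P : Type*} [NormedAddCommGroup P] [NormedSpace ℝ P]
    {g : P → ℝ → ℝ} {K : Set ℝ} {n : ℕ∞} (hg : ContDiff ℝ n (uncurry g)) (hK : IsCompact K)
    (hgK : ∀ p, ∀ v ∉ K, g p v = 0) :
    ContDiff ℝ n fun p => ∫ v, g p v := by
  -- `∫ v, g p v` is the convolution of `1` with `g p`, evaluated at `0`.
  have hconv := contDiffOn_convolution_right_with_param (L := ContinuousLinearMap.mul ℝ ℝ)
    (f := fun _ : ℝ => (1 : ℝ)) (μ := volume) isOpen_univ hK (fun p v _ hv => hgK p v hv)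
    (locallyIntegrable_const 1) (by rwa [univ_prod_univ, contDiffOn_univ])
  rw [univ_prod_univ, contDiffOn_univ] at hconv
  convert hconv.comp (contDiff_id.prodMk (contDiff_const (c := (0 : ℝ)))) using 1
  funext p
  simpa [convolution_def] using (integral_neg_eq_self (g p) volume).symm

/-- `ρ`, `m`, `𝔼`, `𝔽` are the velocity moments of order `0, 1, 2, 3`. -/
noncomputable def velocityMoment (f : ℝ → ℝ → ℝ → ℝ) (j : ℕ) (t x : ℝ) : ℝ :=
  ∫ v, v ^ j * f t x v

section VelocityMoments

variable {R : ℝ}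

theorem Continuous.integrable_of_eq_zero_of_lt_abs {φ : ℝ → ℝ} (hφ : Continuous φ)
    (h0 : ∀ v, R < |v| → φ v = 0) : Integrable φ :=
  hφ.integrable_of_hasCompactSupport
    (HasCompactSupport.intro (isCompact_closedBall 0 R) fun v hv => h0 v (by simpa using hv))

theorem deriv_eq_zero_of_lt_abs {h : ℝ → ℝ} (hsupp : ∀ v, R < |v| → h v = 0) {v : ℝ}
    (hv : R < |v|) : deriv h v = 0 := by
  have h_zero : h =ᶠ[nhds v] fun _ => 0 := by
    filter_upwards [(isOpen_lt continuous_const continuous_abs).mem_nhds hv] with w hw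
    exact hsupp w hw
  rw [h_zero.deriv_eq, deriv_const]

theorem hasDerivAt_integral_pow_mul {h : ℝ → ℝ → ℝ} (hh : ContDiff ℝ 1 (uncurry h))
    (hsupp : ∀ s v, R < |v| → h s v = 0) (j : ℕ) (s₀ : ℝ) :
    HasDerivAt (fun s => ∫ v, v ^ j * h s v) (∫ v, v ^ j * deriv (h · v) s₀) s₀ := by
  simpa only [deriv_const_mul_field'] using hasDerivAt_integral_of_contDiff (μ := volume)
    (g := fun s v => v ^ j * h s v) ((contDiff_snd.pow j).mul hh) (isCompact_closedBall 0 R)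
    (fun s v hv => by rw [hsupp s v (by simpa using hv), mul_zero]) s₀

theorem integral_pow_mul_deriv {h : ℝ → ℝ} (hh : ContDiff ℝ 1 h)
    (hsupp : ∀ v, R < |v| → h v = 0) (j : ℕ) :
    ∫ v, v ^ j * deriv h v = -(j * ∫ v, v ^ (j - 1) * h v) := by
  have hparts := integral_mul_deriv_eq_deriv_mul_of_integrable (u := (· ^ j))
    (u' := fun v => j * v ^ (j - 1)) (v := h) (v' := deriv h)
    (fun v _ => hasDerivAt_pow j v)
    (fun v _ => (hh.differentiable one_ne_zero v).hasDerivAt)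
    ((by fun_prop : Continuous _).integrable_of_eq_zero_of_lt_abs (R := R)
      fun v hv => by simp [deriv_eq_zero_of_lt_abs hsupp hv])
    ((by fun_prop : Continuous _).integrable_of_eq_zero_of_lt_abs (R := R)
      fun v hv => by simp [hsupp v hv])
    ((by fun_prop : Continuous _).integrable_of_eq_zero_of_lt_abs (R := R)
      fun v hv => by simp [hsupp v hv])
  simp_rw [hparts, mul_assoc, integral_const_mul]

variable {f : ℝ → ℝ → ℝ → ℝ}

theorem hasDerivAt_velocityMoment_time
    (hf : ContDiff ℝ 1 fun p : ℝ × ℝ × ℝ => f p.1 p.2.1 p.2.2)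
    (hsupp : ∀ t x v, R < |v| → f t x v = 0) (j : ℕ) (t x : ℝ) :
    HasDerivAt (fun s => velocityMoment f j s x) (∫ v, v ^ j * deriv (fun s => f s x v) t) t :=
  hasDerivAt_integral_pow_mul (h := fun s v => f s x v)
    (hf.comp (by fun_prop : ContDiff ℝ 1 fun p : ℝ × ℝ => (p.1, x, p.2)))
    (fun s v => hsupp s x v) j t

theorem hasDerivAt_velocityMoment_space
    (hf : ContDiff ℝ 1 fun p : ℝ × ℝ × ℝ => f p.1 p.2.1 p.2.2)
    (hsupp : ∀ t x v, R < |v| → f t x v = 0) (j : ℕ) (t x : ℝ) :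
    HasDerivAt (velocityMoment f j t) (∫ v, v ^ j * deriv (fun y => f t y v) x) x :=
  hasDerivAt_integral_pow_mul (h := fun y v => f t y v)
    (hf.comp (by fun_prop : ContDiff ℝ 1 fun p : ℝ × ℝ => (t, p.1, p.2)))
    (fun y v => hsupp t y v) j x

theorem contDiff_velocityMoment {n : ℕ∞}
    (hf : ContDiff ℝ n fun p : ℝ × ℝ × ℝ => f p.1 p.2.1 p.2.2)
    (hsupp : ∀ t x v, R < |v| → f t x v = 0) (j : ℕ) :
    ContDiff ℝ n (uncurry (velocityMoment f j)) :=
  contDiff_integral_of_contDiff (g := fun (p : ℝ × ℝ) v => v ^ j * f p.1 p.2 v)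
    ((contDiff_snd.pow j).mul
      (hf.comp (by fun_prop : ContDiff ℝ n fun q : (ℝ × ℝ) × ℝ => (q.1.1, q.1.2, q.2))))
    (isCompact_closedBall 0 R)
    (fun p v hv => by rw [hsupp p.1 p.2 v (by simpa using hv), mul_zero])

theorem hasDerivAt_velocityMoment_of_vlasov {E : ℝ → ℝ → ℝ}
    (hf : ContDiff ℝ 1 fun p : ℝ × ℝ × ℝ => f p.1 p.2.1 p.2.2)
    (hsupp : ∀ t x v, R < |v| → f t x v = 0)
    (hVlasov : ∀ t x v, deriv (fun s => f s x v) t + v * deriv (fun y => f t y v) x +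
      E t x * deriv (fun w => f t x w) v = 0) (j : ℕ) (t x : ℝ) :
    HasDerivAt (fun s => velocityMoment f j s x)
      (-deriv (velocityMoment f (j + 1) t) x + j * E t x * velocityMoment f (j - 1) t x) t := by
  have hfx : ContDiff ℝ 1 (uncurry fun y v => f t y v) :=
    hf.comp (by fun_prop : ContDiff ℝ 1 fun p : ℝ × ℝ => (t, p.1, p.2))
  have hfv : ContDiff ℝ 1 (f t x) := hf.comp (by fun_prop : ContDiff ℝ 1 fun v : ℝ => (t, x, v))
  have hint_x : Integrable fun v => v ^ (j + 1) * deriv (fun y => f t y v) x :=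
    ((continuous_pow _).mul ((continuous_uncurry_deriv_fst hfx).comp (.prodMk_right x))
      ).integrable_of_eq_zero_of_lt_abs (R := R) fun v hv => by simp [hsupp _ _ v hv]
  have hint_v : Integrable fun v => v ^ j * deriv (f t x) v :=
    ((continuous_pow _).mul (hfv.continuous_deriv le_rfl)).integrable_of_eq_zero_of_lt_abs (R := R)
      fun v hv => by simp [deriv_eq_zero_of_lt_abs (hsupp t x) hv]
  have h_pointwise : ∀ v, v ^ j * deriv (fun s => f s x v) t =
      -(v ^ (j + 1) * deriv (fun y => f t y v) x) - E t x * (v ^ j * deriv (f t x) v) :=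
    fun v => by linear_combination v ^ j * hVlasov t x v
  convert hasDerivAt_velocityMoment_time hf hsupp j t x using 1
  rw [(hasDerivAt_velocityMoment_space hf hsupp (j + 1) t x).deriv]
  simp_rw [h_pointwise]
  rw [integral_sub hint_x.fun_neg (hint_v.const_mul _), integral_neg, integral_const_mul,
    integral_pow_mul_deriv hfv (hsupp t x) j, velocityMoment]
  ring

theorem hasDerivAt_deriv_velocityMoment_two {E : ℝ → ℝ → ℝ}
    (hf : ContDiff ℝ 2 fun p : ℝ × ℝ × ℝ => f p.1 p.2.1 p.2.2)
    (hsupp : ∀ t x v, R < |v| → f t x v = 0) (hE : ContDiff ℝ 1 fun p : ℝ × ℝ => E p.1 p.2)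
    (hVlasov : ∀ t x v, deriv (fun s => f s x v) t + v * deriv (fun y => f t y v) x +
      E t x * deriv (fun w => f t x w) v = 0) (t x : ℝ) :
    HasDerivAt (fun s => deriv (velocityMoment f 2 s) x)
      (-deriv (deriv (velocityMoment f 3 t)) x +
        2 * deriv (fun y => velocityMoment f 1 t y * E t y) x) t := by
  have hM : ∀ j, ContDiff ℝ 2 (uncurry (velocityMoment f j)) := contDiff_velocityMoment hf hsupp
  have hM_slice : ∀ j, ContDiff ℝ 2 (velocityMoment f j t) := fun j =>
    (hM j).comp (contDiff_prodMk_right t)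
  have hE_slice : Differentiable ℝ (E t) :=
    (hE.comp (contDiff_prodMk_right t)).differentiable one_ne_zero
  have h_energy : (fun y => deriv (velocityMoment f 2 · y) t) =
      fun y => -deriv (velocityMoment f 3 t) y + 2 * (velocityMoment f 1 t y * E t y) :=
    funext fun y => by
      rw [(hasDerivAt_velocityMoment_of_vlasov (hf.of_le one_le_two) hsupp hVlasov 2 t y).deriv]
      norm_num
      ring
  apply hasDerivAt_deriv_snd_of_hasDerivAt_deriv_fst (hM 2)
  rw [h_energy]
  exact ((hM_slice 3).differentiable_deriv_two x).hasDerivAt.neg.add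
    ((((hM_slice 1).differentiable two_ne_zero).mul hE_slice x).hasDerivAt.const_mul 2)

end VelocityMoments

theorem vlasov_Efield_third_time_derivative_general (R : ℝ)
    (f : ℝ → ℝ → ℝ → ℝ) (E : ℝ → ℝ → ℝ)
    (hf : ContDiff ℝ 2 (fun p : ℝ × ℝ × ℝ => f p.1 p.2.1 p.2.2))
    (hsupp : ∀ t x v : ℝ, R < |v| → f t x v = 0)
    (hE : ContDiff ℝ 1 (fun p : ℝ × ℝ => E p.1 p.2))
    (hVlasov : ∀ t x v : ℝ,
      deriv (fun s => f s x v) t + v * deriv (fun y => f t y v) x +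
        E t x * deriv (fun w => f t x w) v = 0)
    (hEt : ∀ t x : ℝ, HasDerivAt (fun s => E s x) (-(∫ v : ℝ, v * f t x v)) t) :
    ∀ t x : ℝ,
      HasDerivAt (fun s => deriv (fun r => deriv (fun q => E q x) r) s)
        (2 * deriv (fun y => (∫ v : ℝ, v * f t y v) * E t y) x
          - deriv (fun y => deriv (fun z => ∫ v : ℝ, v ^ 3 * f t z v) y) x
          + E t x * deriv (fun y => ∫ v : ℝ, v * f t y v) x
          + (∫ v : ℝ, f t x v) * (∫ v : ℝ, v * f t x v)) t := by
  intro t x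
  set M := velocityMoment f
  have hρ : ∀ t x, ∫ v, f t x v = M 0 t x := fun t x => by simp [M, velocityMoment]
  have hm : ∀ t x, ∫ v, v * f t x v = M 1 t x := fun t x => by simp [M, velocityMoment]
  have h𝔽 : ∀ t x, ∫ v, v ^ 3 * f t x v = M 3 t x := fun _ _ => rfl
  simp only [hρ, hm, h𝔽] at hEt ⊢
  have h_moment : ∀ j t x, HasDerivAt (fun s => M j s x)
      (-deriv (M (j + 1) t) x + j * E t x * M (j - 1) t x) t :=
    hasDerivAt_velocityMoment_of_vlasov (hf.of_le one_le_two) hsupp hVlasov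
  have h_dt2E : deriv (fun r => deriv (fun q => E q x) r) =
      fun s => deriv (M 2 s) x - E s x * M 0 s x := funext fun s => by
    simp only [fun r => (hEt r x).deriv, deriv.fun_neg, (h_moment 1 s x).deriv]
    norm_num
    ring
  rw [h_dt2E]
  refine ((hasDerivAt_deriv_velocityMoment_two hf hsupp hE hVlasov t x).sub
    ((hEt t x).mul (h_moment 0 t x))).congr_deriv ?_
  norm_num
  ring

/-- If `∂_t E = −m`, then the electric field is three times differentiable in time and
`∂_t³ E = 2 ∂_x(m E) − ∂_x² 𝔽 + E ∂_x m + ρ m`. -/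
theorem vlasov_Efield_third_time_derivative (R : ℝ) (hR : 0 < R)
    (f : ℝ → ℝ → ℝ → ℝ) (E : ℝ → ℝ → ℝ)
    (hf : ContDiff ℝ 2 (fun p : ℝ × ℝ × ℝ => f p.1 p.2.1 p.2.2))
    (hsupp : ∀ t x v : ℝ, R < |v| → f t x v = 0)
    (hE : ContDiff ℝ 1 (fun p : ℝ × ℝ => E p.1 p.2))
    (hVlasov : ∀ t x v : ℝ,
      deriv (fun s => f s x v) t + v * deriv (fun y => f t y v) x +
        E t x * deriv (fun w => f t x w) v = 0)
    (hEt : ∀ t x : ℝ, HasDerivAt (fun s => E s x) (-(∫ v : ℝ, v * f t x v)) t) :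
    ∀ t x : ℝ,
      HasDerivAt (fun s => deriv (fun r => deriv (fun q => E q x) r) s)
        (2 * deriv (fun y => (∫ v : ℝ, v * f t y v) * E t y) x
          - deriv (fun y => deriv (fun z => ∫ v : ℝ, v ^ 3 * f t z v) y) x
          + E t x * deriv (fun y => ∫ v : ℝ, v * f t y v) x
          + (∫ v : ℝ, f t x v) * (∫ v : ℝ, v * f t x v)) t :=
  vlasov_Efield_third_time_derivative_general R f E hf hsupp hE hVlasov hEt
end

section
/- Let L > 0 and R > 0. Let f : ℝ × ℝ × ℝ → ℝ be C¹, 2L-periodic in x, with support contained in {(t,x,v) : |v| ≤ R}; let E : ℝ × ℝ → ℝ be C², 2L-periodic in x; suppose ∂_t f + v ∂_x f + E(t,x) ∂_v f = 0 everywhere; suppose there is a constant ρ₀ such that ∂_x E(t,x) = ρ(t,x) − ρ₀ for all (t,x), where ρ(t,x) = ∫_ℝ f(t,x,v) dv; and suppose ∫_{−L}^{L} E(t,x) dx = 0 for all t. Then the total energy t ↦ (1/2) ∫_{−L}^{L} ∫_ℝ v² f(t,x,v) dv dx + (1/2) ∫_{−L}^{L} E(t,x)² dx is constant in time. -/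
/-!
Differentiate the energy under the integral sign, after truncating velocities to an interval
`[-b, b]` outside of which `f` vanishes. Multiplying the Vlasov equation by `v ^ 2` and
integrating by parts in `v` gives `∂ₜ ∫ v² f = -∂ₓ ∫ v³ f + 2 E j` with `j = ∫ v f`; the flux term
integrates to zero over a period, so the kinetic energy changes at rate `∫ E j`. Differentiating
the Poisson equation in time and using the continuity equation `∂ₜ ρ + ∂ₓ j = 0` gives
`∂ₓ (∂ₜ E + j) = 0`, so `∂ₜ E = c(t) - j`; since `E` has zero mean, the field energy
`∫ E²` changes at rate `-2 ∫ E j`.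
-/

open MeasureTheory intervalIntegral Set Function

section Calculus

variable {G : Type*} [NormedAddCommGroup G] [NormedSpace ℝ G]

theorem hasDerivAt_intervalIntegral_of_continuous {F F' : ℝ → ℝ → G} {a b : ℝ}
    (hF : ∀ s, Continuous (F s)) (hF' : Continuous ↿F')
    (hderiv : ∀ s x, HasDerivAt (F · x) (F' s x) s) (t : ℝ) :
    HasDerivAt (fun s => ∫ x in a..b, F s x) (∫ x in a..b, F' t x) t := by
  obtain ⟨C, hC⟩ : ∃ C, ∀ p ∈ Icc (t - 1) (t + 1) ×ˢ uIcc a b, ‖↿F' p‖ ≤ C :=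
    (isCompact_Icc.prod isCompact_uIcc).exists_bound_of_continuousOn hF'.continuousOn
  refine (hasDerivAt_integral_of_dominated_loc_of_deriv_le (bound := fun _ => C)
    (Metric.ball_mem_nhds t one_pos)
    (.of_forall fun s => (hF s).aestronglyMeasurable.restrict)
    ((hF t).intervalIntegrable a b)
    ((hF'.comp (continuous_const.prodMk continuous_id)).aestronglyMeasurable.restrict)
    (.of_forall fun x hx s hs => hC (s, x) ⟨?_, uIoc_subset_uIcc hx⟩)
    intervalIntegrable_const (.of_forall fun x _ s _ => hderiv s x)).2
  rw [Metric.mem_ball, Real.dist_eq, abs_lt] at hs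
  constructor <;> linarith [hs.1, hs.2]

theorem intervalIntegral_deriv_eq_zero_of_periodic [CompleteSpace G] {g g' : ℝ → G} {T : ℝ}
    (hg : ∀ x, HasDerivAt g (g' x) x) (hper : Periodic g T) (a : ℝ)
    (hg' : IntervalIntegrable g' volume a (a + T)) :
    ∫ x in a..a + T, g' x = 0 := by
  rw [integral_eq_sub_of_hasDerivAt (fun x _ => hg x) hg', hper a, sub_self]

theorem intervalIntegral_eq_integral_of_forall_lt_abs {g : ℝ → G} {R b : ℝ} (hRb : R < b)
    (hg : ∀ v, R < |v| → g v = 0) :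
    ∫ v in (-b)..b, g v = ∫ v, g v := by
  refine integral_eq_integral_of_support_subset fun v hv => ?_
  have := abs_le.mp (not_lt.mp (mt (hg v) hv))
  exact ⟨by linarith [this.1], by linarith [this.2]⟩

theorem integral_pow_mul_deriv_eq_of_eq_zero {g g' : ℝ → ℝ} {a b : ℝ} (n : ℕ)
    (hg : ∀ v, HasDerivAt g (g' v) v) (hg' : IntervalIntegrable g' volume a b)
    (ha : g a = 0) (hb : g b = 0) :
    ∫ v in a..b, v ^ n * g' v = -(n * ∫ v in a..b, v ^ (n - 1) * g v) := by
  rw [intervalIntegral.integral_mul_deriv_eq_deriv_mul (fun v _ => hasDerivAt_pow n v)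
    (fun v _ => hg v)
    ((by fun_prop : Continuous fun v : ℝ => (n : ℝ) * v ^ (n - 1)).intervalIntegrable _ _) hg',
    ha, hb]
  simp only [mul_zero, sub_self, zero_sub, mul_assoc, intervalIntegral.integral_const_mul]

variable {X E : Type*} [TopologicalSpace X] [NormedAddCommGroup E] [NormedSpace ℝ E]

theorem ContDiff.continuous_deriv_comp {F : E → G} (hF : ContDiff ℝ 1 F) {γ : X → ℝ → E}
    {τ : X → ℝ} {e : E} (hγ : ∀ p s, HasDerivAt (γ p) e s)
    (hγτ : Continuous fun p => γ p (τ p)) :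
    Continuous fun p => deriv (fun s => F (γ p s)) (τ p) := by
  have hderiv : ∀ p, deriv (fun s => F (γ p s)) (τ p) = fderiv ℝ F (γ p (τ p)) e := fun p =>
    ((hF.differentiable one_ne_zero _).hasFDerivAt.comp_hasDerivAt _ (hγ p _)).deriv
  simp only [hderiv]
  exact ((hF.continuous_fderiv one_ne_zero).comp hγτ).clm_apply continuous_const

theorem ContDiff.hasDerivAt_deriv_comm {F F₂ : ℝ → ℝ → G} (hF : ContDiff ℝ 2 ↿F)
    (hF₂ : ∀ s y, HasDerivAt (F s ·) (F₂ s y) y) (t x : ℝ) :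
    HasDerivAt (fun y => deriv (F · y) t) (deriv (F₂ · x) t) x := by
  set D := fderiv ℝ ↿F
  have hFd : Differentiable ℝ ↿F := hF.differentiable two_ne_zero
  have hDd : Differentiable ℝ D := (hF.fderiv_right (m := 1) le_rfl).differentiable one_ne_zero
  have hfst : ∀ s y, HasDerivAt (fun s : ℝ => (s, y)) ((1, 0) : ℝ × ℝ) s := fun s y =>
    (hasDerivAt_id s).prodMk (hasDerivAt_const s y)
  have hsnd : ∀ s y, HasDerivAt (fun y : ℝ => (s, y)) ((0, 1) : ℝ × ℝ) y := fun s y =>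
    (hasDerivAt_const y s).prodMk (hasDerivAt_id y)
  have hdt : ∀ s y, deriv (F · y) s = D (s, y) (1, 0) := fun s y =>
    ((hFd _).hasFDerivAt.comp_hasDerivAt s (hfst s y)).deriv
  have hdx : ∀ s y, F₂ s y = D (s, y) (0, 1) := fun s y =>
    (hF₂ s y).unique ((hFd _).hasFDerivAt.comp_hasDerivAt y (hsnd s y))
  have hxt : HasDerivAt (fun y => D (t, y) (1, 0)) (fderiv ℝ D (t, x) (0, 1) (1, 0)) x := by
    simpa using ((hDd _).hasFDerivAt.comp_hasDerivAt x (hsnd t x)).clm_apply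
      (hasDerivAt_const x ((1, 0) : ℝ × ℝ))
  have htx : HasDerivAt (fun s => D (s, x) (0, 1)) (fderiv ℝ D (t, x) (1, 0) (0, 1)) t := by
    simpa using ((hDd _).hasFDerivAt.comp_hasDerivAt t (hfst t x)).clm_apply
      (hasDerivAt_const t ((0, 1) : ℝ × ℝ))
  simp only [hdt, hdx, htx.deriv]
  rwa [← hF.contDiffAt.isSymmSndFDerivAt (by simp)]

end Calculus

structure VlasovSolution (E : ℝ → ℝ → ℝ) (f fx fv : ℝ → ℝ → ℝ → ℝ) : Prop where
  continuous : Continuous ↿f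
  continuous_fx : Continuous ↿fx
  continuous_fv : Continuous ↿fv
  continuous_field : Continuous ↿E
  hasDerivAt_t : ∀ t x v, HasDerivAt (f · x v) (-(v * fx t x v) - E t x * fv t x v) t
  hasDerivAt_x : ∀ t x v, HasDerivAt (f t · v) (fx t x v) x
  hasDerivAt_v : ∀ t x v, HasDerivAt (f t x ·) (fv t x v) v

namespace VlasovSolution

variable {E : ℝ → ℝ → ℝ} {f fx fv : ℝ → ℝ → ℝ → ℝ}

theorem of_contDiff (hf : ContDiff ℝ 1 ↿f) (hE : Continuous ↿E)
    (hVlasov : ∀ t x v,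
      deriv (f · x v) t + v * deriv (f t · v) x + E t x * deriv (f t x ·) v = 0) :
    VlasovSolution E f (fun t x v => deriv (f t · v) x) (fun t x v => deriv (f t x ·) v) where
  continuous := hf.continuous
  continuous_fx := hf.continuous_deriv_comp (γ := fun (p : ℝ × ℝ × ℝ) y => (p.1, y, p.2.2))
    (τ := fun p => p.2.1) (fun p y => (hasDerivAt_const y p.1).prodMk
      ((hasDerivAt_id y).prodMk (hasDerivAt_const y p.2.2))) (by fun_prop)
  continuous_fv := hf.continuous_deriv_comp (γ := fun (p : ℝ × ℝ × ℝ) w => (p.1, p.2.1, w))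
    (τ := fun p => p.2.2) (fun p w => (hasDerivAt_const w p.1).prodMk
      ((hasDerivAt_const w p.2.1).prodMk (hasDerivAt_id w))) (by fun_prop)
  continuous_field := hE
  hasDerivAt_t t x v := by
    have hd : DifferentiableAt ℝ (f · x v) t := by
      have := hf.differentiable one_ne_zero; fun_prop
    refine hd.hasDerivAt.congr_deriv ?_
    linarith [hVlasov t x v]
  hasDerivAt_x t x v := by
    have := hf.differentiable one_ne_zero
    exact (by fun_prop : DifferentiableAt ℝ (f t · v) x).hasDerivAt
  hasDerivAt_v t x v := by
    have := hf.differentiable one_ne_zero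
    exact (by fun_prop : DifferentiableAt ℝ (f t x ·) v).hasDerivAt

variable {a b : ℝ}

theorem hasDerivAt_moment_x (h : VlasovSolution E f fx fv) (n : ℕ) (t x : ℝ) :
    HasDerivAt (fun y => ∫ v in a..b, v ^ n * f t y v) (∫ v in a..b, v ^ n * fx t x v) x := by
  have := h.continuous; have := h.continuous_fx
  exact hasDerivAt_intervalIntegral_of_continuous (by fun_prop) (by fun_prop)
    (fun y v => (h.hasDerivAt_x t y v).const_mul _) x

/-- At `n = 0` the truncated `n - 1` is harmless, as the last term carries the factor `n`. -/
theorem hasDerivAt_moment_t (h : VlasovSolution E f fx fv) (n : ℕ) (t x : ℝ)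
    (ha : f t x a = 0) (hb : f t x b = 0) :
    HasDerivAt (fun s => ∫ v in a..b, v ^ n * f s x v)
      (-(∫ v in a..b, v ^ (n + 1) * fx t x v) + n * E t x * ∫ v in a..b, v ^ (n - 1) * f t x v)
      t := by
  have := h.continuous; have := h.continuous_fx; have := h.continuous_fv
  have := h.continuous_field
  refine (hasDerivAt_intervalIntegral_of_continuous (by fun_prop) (by fun_prop)
    (fun s v => (h.hasDerivAt_t s x v).const_mul (v ^ n)) t).congr_deriv ?_
  have hibp := integral_pow_mul_deriv_eq_of_eq_zero n (h.hasDerivAt_v t x)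
    (Continuous.intervalIntegrable (by fun_prop) a b) ha hb
  simp only [mul_sub, mul_neg, ← mul_assoc, ← pow_succ]
  rw [intervalIntegral.integral_sub (by apply Continuous.intervalIntegrable; fun_prop)
    (by apply Continuous.intervalIntegrable; fun_prop), intervalIntegral.integral_neg]
  simp only [mul_comm _ (E t x), mul_assoc, intervalIntegral.integral_const_mul, hibp]
  ring

theorem integral_flux_eq_zero (h : VlasovSolution E f fx fv) {L : ℝ}
    (hper : ∀ t x v, f t (x + 2 * L) v = f t x v) (n : ℕ) (t : ℝ) :
    ∫ x in (-L)..L, ∫ v in a..b, v ^ n * fx t x v = 0 := by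
  have := h.continuous_fx
  have hcont : Continuous fun x => ∫ v in a..b, v ^ n * fx t x v :=
    continuous_parametric_intervalIntegral_of_continuous' (by fun_prop) a b
  have := intervalIntegral_deriv_eq_zero_of_periodic (h.hasDerivAt_moment_x n t)
    (T := 2 * L) (fun x => by simp only [hper]) (-L) (hcont.intervalIntegrable _ _)
  rwa [show -L + 2 * L = L by ring] at this

theorem hasDerivAt_kineticEnergy (h : VlasovSolution E f fx fv) {L : ℝ}
    (hper : ∀ t x v, f t (x + 2 * L) v = f t x v)
    (ha : ∀ t x, f t x a = 0) (hb : ∀ t x, f t x b = 0) (t : ℝ) :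
    HasDerivAt (fun s => ∫ x in (-L)..L, ∫ v in a..b, v ^ 2 * f s x v)
      (2 * ∫ x in (-L)..L, E t x * ∫ v in a..b, v * f t x v) t := by
  have := h.continuous; have := h.continuous_fx; have := h.continuous_field
  have hflux : Continuous fun p : ℝ × ℝ => ∫ v in a..b, v ^ 3 * fx p.1 p.2 v :=
    continuous_parametric_intervalIntegral_of_continuous' (by fun_prop) a b
  have hcurrent : Continuous fun p : ℝ × ℝ => ∫ v in a..b, v ^ 1 * f p.1 p.2 v :=
    continuous_parametric_intervalIntegral_of_continuous' (by fun_prop) a b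
  refine (hasDerivAt_intervalIntegral_of_continuous
    (fun s => continuous_parametric_intervalIntegral_of_continuous' (by fun_prop) a b)
    (by fun_prop) (fun s x => h.hasDerivAt_moment_t 2 s x (ha s x) (hb s x)) t).congr_deriv ?_
  rw [intervalIntegral.integral_add (by apply Continuous.intervalIntegrable; fun_prop)
    (by apply Continuous.intervalIntegrable; fun_prop), intervalIntegral.integral_neg,
    h.integral_flux_eq_zero hper]
  norm_num [mul_assoc, intervalIntegral.integral_const_mul]

theorem exists_deriv_field_eq_sub_current (h : VlasovSolution E f fx fv)
    (hE : ContDiff ℝ 2 ↿E) {ρ₀ : ℝ}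
    (hPoisson : ∀ s y, HasDerivAt (E s ·) ((∫ v in a..b, f s y v) - ρ₀) y) (t : ℝ)
    (ha : ∀ x, f t x a = 0) (hb : ∀ x, f t x b = 0) :
    ∃ c, ∀ x, deriv (E · x) t = c - ∫ v in a..b, v * f t x v := by
  have hampere :
      ∀ x, HasDerivAt (fun y => deriv (E · y) t + ∫ v in a..b, v * f t y v) 0 x := by
    intro x
    have hρ := (h.hasDerivAt_moment_t 0 t x (ha x) (hb x)).sub_const ρ₀
    simp only [pow_zero, one_mul, zero_add, pow_one, CharP.cast_eq_zero, zero_mul, add_zero] at hρ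
    have := (hE.hasDerivAt_deriv_comm hPoisson t x).fun_add
      (h.hasDerivAt_moment_x (a := a) (b := b) 1 t x)
    simp only [hρ.deriv, pow_one, neg_add_cancel] at this
    exact this
  refine ⟨deriv (E · 0) t + ∫ v in a..b, v * f t 0 v, fun x => ?_⟩
  rw [← is_const_of_deriv_eq_zero (fun y => (hampere y).differentiableAt)
    (fun y => (hampere y).deriv) x 0]
  ring

end VlasovSolution

theorem hasDerivAt_integral_sq_of_deriv_eq_sub {E : ℝ → ℝ → ℝ} {J : ℝ → ℝ} {a b c t : ℝ}
    (hE : ContDiff ℝ 1 ↿E) (hJ : ∀ x, deriv (E · x) t = c - J x)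
    (hmean : ∫ x in a..b, E t x = 0) :
    HasDerivAt (fun s => ∫ x in a..b, E s x ^ 2) (-(2 * ∫ x in a..b, E t x * J x)) t := by
  have hEt : Continuous fun p : ℝ × ℝ => deriv (E · p.2) p.1 :=
    hE.continuous_deriv_comp (γ := fun (p : ℝ × ℝ) s => (s, p.2)) (τ := Prod.fst)
      (fun p s => (hasDerivAt_id s).prodMk (hasDerivAt_const s p.2)) (by fun_prop)
  have hEt_t : Continuous fun x => deriv (E · x) t :=
    hEt.comp (by fun_prop : Continuous fun x : ℝ => (t, x))
  have := hE.differentiable one_ne_zero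
  have hdE : ∀ s x, HasDerivAt (E · x) (deriv (E · x) s) s := fun s x =>
    (by fun_prop : DifferentiableAt ℝ (E · x) s).hasDerivAt
  have := hE.continuous
  refine (hasDerivAt_intervalIntegral_of_continuous (by fun_prop)
    (by fun_prop : Continuous fun p : ℝ × ℝ => 2 * E p.1 p.2 * deriv (E · p.2) p.1)
    (fun s x => by simpa using (hdE s x).fun_pow 2) t).congr_deriv ?_
  have hJ' : ∀ x, E t x * J x = c * E t x - E t x * deriv (E · x) t := fun x => by
    rw [hJ]; ring
  simp only [hJ']
  rw [intervalIntegral.integral_sub (by apply Continuous.intervalIntegrable; fun_prop)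
    (by apply Continuous.intervalIntegrable; fun_prop), intervalIntegral.integral_const_mul,
    hmean]
  simp only [mul_assoc, intervalIntegral.integral_const_mul]
  ring

theorem vlasov_poisson_energy_conservation_general (L R ρ₀ : ℝ)
    (f : ℝ → ℝ → ℝ → ℝ) (E : ℝ → ℝ → ℝ)
    (hf : ContDiff ℝ 1 (fun p : ℝ × ℝ × ℝ => f p.1 p.2.1 p.2.2))
    (hfper : ∀ t x v : ℝ, f t (x + 2 * L) v = f t x v)
    (hsupp : ∀ t x v : ℝ, R < |v| → f t x v = 0)
    (hE : ContDiff ℝ 2 (fun p : ℝ × ℝ => E p.1 p.2))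
    (hVlasov : ∀ t x v : ℝ,
      deriv (fun s => f s x v) t + v * deriv (fun y => f t y v) x +
        E t x * deriv (fun w => f t x w) v = 0)
    (hPoisson : ∀ t x : ℝ, HasDerivAt (fun y => E t y) ((∫ v : ℝ, f t x v) - ρ₀) x)
    (hmean : ∀ t : ℝ, (∫ x in (-L)..L, E t x) = 0) :
    ∀ t₁ t₂ : ℝ,
      (1 / 2) * (∫ x in (-L)..L, ∫ v : ℝ, v ^ 2 * f t₁ x v)
          + (1 / 2) * ∫ x in (-L)..L, (E t₁ x) ^ 2
        = (1 / 2) * (∫ x in (-L)..L, ∫ v : ℝ, v ^ 2 * f t₂ x v)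
          + (1 / 2) * ∫ x in (-L)..L, (E t₂ x) ^ 2 := by
  obtain ⟨b, hRb, hb⟩ : ∃ b, R < b ∧ 0 < b :=
    ⟨|R| + 1, by linarith [le_abs_self R], by positivity⟩
  have hfa : ∀ t x, f t x (-b) = 0 := fun t x => hsupp t x _ (by rwa [abs_neg, abs_of_pos hb])
  have hfb : ∀ t x, f t x b = 0 := fun t x => hsupp t x _ (by rwa [abs_of_pos hb])
  have hkinetic : ∀ t x, ∫ v, v ^ 2 * f t x v = ∫ v in (-b)..b, v ^ 2 * f t x v := fun t x =>
    (intervalIntegral_eq_integral_of_forall_lt_abs hRb fun v hv => by simp [hsupp t x v hv]).symm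
  have hGauss : ∀ t x, HasDerivAt (E t ·) ((∫ v in (-b)..b, f t x v) - ρ₀) x := fun t x => by
    rw [intervalIntegral_eq_integral_of_forall_lt_abs hRb (hsupp t x)]
    exact hPoisson t x
  have hsol := VlasovSolution.of_contDiff hf hE.continuous hVlasov
  have henergy : ∀ t, HasDerivAt (fun s => (1 / 2) * (∫ x in (-L)..L, ∫ v in (-b)..b,
      v ^ 2 * f s x v) + (1 / 2) * ∫ x in (-L)..L, (E s x) ^ 2) 0 t := by
    intro t
    obtain ⟨c, hc⟩ := hsol.exists_deriv_field_eq_sub_current hE hGauss t (hfa t) (hfb t)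
    have hpotential := hasDerivAt_integral_sq_of_deriv_eq_sub (hE.of_le one_le_two) hc (hmean t)
    refine (((hsol.hasDerivAt_kineticEnergy hfper hfa hfb t).const_mul _).add
      (hpotential.const_mul _)).congr_deriv ?_
    ring
  intro t₁ t₂
  simp only [hkinetic]
  exact is_const_of_deriv_eq_zero (fun t => (henergy t).differentiableAt)
    (fun t => (henergy t).deriv) t₁ t₂

/-- Conservation of total energy for the periodic 1+1 Vlasov–Poisson system. -/
theorem vlasov_poisson_energy_conservation (L R ρ₀ : ℝ) (hL : 0 < L) (hR : 0 < R)
    (f : ℝ → ℝ → ℝ → ℝ) (E : ℝ → ℝ → ℝ)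
    (hf : ContDiff ℝ 1 (fun p : ℝ × ℝ × ℝ => f p.1 p.2.1 p.2.2))
    (hfper : ∀ t x v : ℝ, f t (x + 2 * L) v = f t x v)
    (hsupp : ∀ t x v : ℝ, R < |v| → f t x v = 0)
    (hE : ContDiff ℝ 2 (fun p : ℝ × ℝ => E p.1 p.2))
    (hEper : ∀ t x : ℝ, E t (x + 2 * L) = E t x)
    (hVlasov : ∀ t x v : ℝ,
      deriv (fun s => f s x v) t + v * deriv (fun y => f t y v) x +
        E t x * deriv (fun w => f t x w) v = 0)
    (hPoisson : ∀ t x : ℝ, HasDerivAt (fun y => E t y) ((∫ v : ℝ, f t x v) - ρ₀) x)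
    (hmean : ∀ t : ℝ, (∫ x in (-L)..L, E t x) = 0) :
    ∀ t₁ t₂ : ℝ,
      (1 / 2) * (∫ x in (-L)..L, ∫ v : ℝ, v ^ 2 * f t₁ x v)
          + (1 / 2) * ∫ x in (-L)..L, (E t₁ x) ^ 2
        = (1 / 2) * (∫ x in (-L)..L, ∫ v : ℝ, v ^ 2 * f t₂ x v)
          + (1 / 2) * ∫ x in (-L)..L, (E t₂ x) ^ 2 :=
  vlasov_poisson_energy_conservation_general L R ρ₀ f E hf hfper hsupp hE hVlasov hPoisson hmean
end
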